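/- arXiv:2511.22602 — 7 statements merged into one kernel-verified Lean document; each statement's English description precedes it below -/
import Mathlib

section
/- Let g ∈ G and let (R,L) be a multiplier of a G-graded F-algebra A. Define the F-linear maps R_g := ∑_{h∈G} π_{hg}∘R∘π_h and L_g := ∑_{h∈G} π_{gh}∘L∘π_h. Then the pair (R_g, L_g) is again a multiplier of A. -/
set_option linter.unusedSectionVars false

open DirectSum

namespace Stmt0Aux

variable {F G A : Type*} [Field F] [Group G] [Fintype G] [DecidableEq G]
    [NonUnitalRing A] [Module F A] [SMulCommClass F A A] [IsScalarTower F A A]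
    (𝒜 : G → Submodule F A) [DirectSum.Decomposition 𝒜]

noncomputable def pL (h : G) : A →ₗ[F] A :=
  ((𝒜 h).subtype.comp (DirectSum.component F G (fun i => 𝒜 i) h)).comp
    (DirectSum.decomposeLinearEquiv 𝒜).toLinearMap

lemma pL_apply (h : G) (a : A) :
    pL (F := F) 𝒜 h a = ((DirectSum.decompose 𝒜 a) h : A) := rfl

lemma pL_mem (h : G) (a : A) : pL (F := F) 𝒜 h a ∈ 𝒜 h := SetLike.coe_mem _

lemma pL_same {h : G} {a : A} (ha : a ∈ 𝒜 h) : pL (F := F) 𝒜 h a = a :=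
  DirectSum.decompose_of_mem_same 𝒜 ha

lemma pL_ne {k h : G} {a : A} (ha : a ∈ 𝒜 k) (hne : k ≠ h) :
    pL (F := F) 𝒜 h a = 0 :=
  DirectSum.decompose_of_mem_ne 𝒜 ha hne

lemma sum_pL (a : A) : ∑ h : G, pL (F := F) 𝒜 h a = a := by
  classical
  conv_rhs => rw [← DirectSum.sum_support_decompose 𝒜 a]
  refine (Finset.sum_subset (Finset.subset_univ _) (fun h _ hh => ?_)).symm
  simp [pL_apply, DFinsupp.notMem_support_iff.mp hh]

lemma projA (hmul : ∀ (g h : G), ∀ a ∈ 𝒜 g, ∀ b ∈ 𝒜 h, a * b ∈ 𝒜 (g * h)) {i : G} {a : A} (ha : a ∈ 𝒜 i) (k : G) (y : A) :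
    pL (F := F) 𝒜 (i * k) (a * y) = a * pL (F := F) 𝒜 k y := by
  conv_lhs => rw [← sum_pL (F := F) 𝒜 y, Finset.mul_sum, map_sum]
  rw [Finset.sum_eq_single k]
  · exact pL_same 𝒜 (hmul i k a ha _ (pL_mem 𝒜 k y))
  · intro j _ hj
    exact pL_ne 𝒜 (hmul i j a ha _ (pL_mem 𝒜 j y))
      (fun h => hj (mul_left_cancel h))
  · simp

lemma projB (hmul : ∀ (g h : G), ∀ a ∈ 𝒜 g, ∀ b ∈ 𝒜 h, a * b ∈ 𝒜 (g * h)) {j : G} {b : A} (hb : b ∈ 𝒜 j) (k : G) (y : A) :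
    pL (F := F) 𝒜 (k * j) (y * b) = pL (F := F) 𝒜 k y * b := by
  conv_lhs => rw [← sum_pL (F := F) 𝒜 y, Finset.sum_mul, map_sum]
  rw [Finset.sum_eq_single k]
  · exact pL_same 𝒜 (hmul k j _ (pL_mem 𝒜 k y) b hb)
  · intro l _ hl
    exact pL_ne 𝒜 (hmul l j _ (pL_mem 𝒜 l y) b hb)
      (fun h => hl (mul_right_cancel h))
  · simp

end Stmt0Aux

open Stmt0Aux

/-- If `(R, L)` is a multiplier of a `G`-graded `F`-algebra `A` and `g ∈ G`,
then the pair `(R_g, L_g)`, where `R_g = ∑_{h ∈ G} π_{hg} ∘ R ∘ π_h` and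
`L_g = ∑_{h ∈ G} π_{gh} ∘ L ∘ π_h`, is again a multiplier of `A`. -/
theorem stmt0 {F G A : Type*} [Field F] [Group G] [Fintype G] [DecidableEq G]
    [NonUnitalRing A] [Module F A] [SMulCommClass F A A] [IsScalarTower F A A]
    (𝒜 : G → Submodule F A) [DirectSum.Decomposition 𝒜]
    (hmul : ∀ (g h : G), ∀ a ∈ 𝒜 g, ∀ b ∈ 𝒜 h, a * b ∈ 𝒜 (g * h))
    (π : G → (A →ₗ[F] A))
    (hπ : ∀ h : G, π h = ((𝒜 h).subtype.comp
      (DirectSum.component F G (fun i => 𝒜 i) h)).comp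
        (DirectSum.decomposeLinearEquiv 𝒜).toLinearMap)
    (R L : A →ₗ[F] A)
    (hR : ∀ a b : A, R (a * b) = a * R b)
    (hL : ∀ a b : A, L (a * b) = L a * b)
    (hRL : ∀ a b : A, R a * b = a * L b)
    (g : G)
    (Rg Lg : A →ₗ[F] A)
    (hRg : Rg = ∑ h : G, (π (h * g)).comp (R.comp (π h)))
    (hLg : Lg = ∑ h : G, (π (g * h)).comp (L.comp (π h))) :
    (∀ a b : A, Rg (a * b) = a * Rg b) ∧ (∀ a b : A, Lg (a * b) = Lg a * b) ∧
      (∀ a b : A, Rg a * b = a * Lg b) := by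
  have hπ' : ∀ h : G, π h = pL (F := F) 𝒜 h := hπ
  have hRg' : ∀ x : A, Rg x = ∑ h : G, pL (F := F) 𝒜 (h * g) (R (pL (F := F) 𝒜 h x)) := by
    intro x
    simp [hRg, hπ', LinearMap.sum_apply]
  have hLg' : ∀ x : A, Lg x = ∑ h : G, pL (F := F) 𝒜 (g * h) (L (pL (F := F) 𝒜 h x)) := by
    intro x
    simp [hLg, hπ', LinearMap.sum_apply]
  -- homogeneous cases
  have key1 : ∀ (i : G) (a : A), a ∈ 𝒜 i → ∀ (j : G) (b : A), b ∈ 𝒜 j →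
      Rg (a * b) = a * Rg b := by
    intro i a ha j b hb
    have hab : a * b ∈ 𝒜 (i * j) := hmul i j a ha b hb
    rw [hRg' (a * b), hRg' b, Finset.mul_sum]
    rw [Finset.sum_eq_single (i * j), Finset.sum_eq_single j]
    · rw [pL_same 𝒜 hab, pL_same 𝒜 hb, hR, mul_assoc i j g]
      exact projA 𝒜 hmul ha (j * g) (R b)
    · intro l _ hl
      rw [pL_ne 𝒜 hb hl.symm, map_zero, map_zero, mul_zero]
    · simp
    · intro l _ hl
      rw [pL_ne 𝒜 hab (Ne.symm hl), map_zero, map_zero]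
    · simp
  have key2 : ∀ (i : G) (a : A), a ∈ 𝒜 i → ∀ (j : G) (b : A), b ∈ 𝒜 j →
      Lg (a * b) = Lg a * b := by
    intro i a ha j b hb
    have hab : a * b ∈ 𝒜 (i * j) := hmul i j a ha b hb
    rw [hLg' (a * b), hLg' a, Finset.sum_mul]
    rw [Finset.sum_eq_single (i * j), Finset.sum_eq_single i]
    · rw [pL_same 𝒜 hab, pL_same 𝒜 ha, hL, ← mul_assoc g i j]
      exact projB 𝒜 hmul hb (g * i) (L a)
    · intro l _ hl
      rw [pL_ne 𝒜 ha hl.symm, map_zero, map_zero, zero_mul]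
    · simp
    · intro l _ hl
      rw [pL_ne 𝒜 hab (Ne.symm hl), map_zero, map_zero]
    · simp
  have key3 : ∀ (i : G) (a : A), a ∈ 𝒜 i → ∀ (j : G) (b : A), b ∈ 𝒜 j →
      Rg a * b = a * Lg b := by
    intro i a ha j b hb
    rw [hRg' a, hLg' b, Finset.sum_mul, Finset.mul_sum]
    rw [Finset.sum_eq_single i, Finset.sum_eq_single j]
    · rw [pL_same 𝒜 ha, pL_same 𝒜 hb, ← projB 𝒜 hmul hb (i * g) (R a), hRL,
        mul_assoc i g j, projA 𝒜 hmul ha (g * j) (L b)]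
    · intro l _ hl
      rw [pL_ne 𝒜 hb hl.symm, map_zero, map_zero, mul_zero]
    · simp
    · intro l _ hl
      rw [pL_ne 𝒜 ha hl.symm, map_zero, map_zero, zero_mul]
    · simp
  -- extend by linearity
  refine ⟨fun a b => ?_, fun a b => ?_, fun a b => ?_⟩
  · rw [← sum_pL (F := F) 𝒜 a, ← sum_pL (F := F) 𝒜 b]
    simp only [Finset.sum_mul, Finset.mul_sum, map_sum]
    exact Finset.sum_congr rfl fun i _ => Finset.sum_congr rfl fun j _ =>
      key1 j _ (pL_mem 𝒜 j a) i _ (pL_mem 𝒜 i b)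
  · rw [← sum_pL (F := F) 𝒜 a, ← sum_pL (F := F) 𝒜 b]
    simp only [Finset.sum_mul, Finset.mul_sum, map_sum]
    exact Finset.sum_congr rfl fun i _ => Finset.sum_congr rfl fun j _ =>
      key2 j _ (pL_mem 𝒜 j a) i _ (pL_mem 𝒜 i b)
  · rw [← sum_pL (F := F) 𝒜 a, ← sum_pL (F := F) 𝒜 b]
    simp only [Finset.sum_mul, Finset.mul_sum, map_sum]
    exact Finset.sum_congr rfl fun i _ => Finset.sum_congr rfl fun j _ =>
      key3 j _ (pL_mem 𝒜 j a) i _ (pL_mem 𝒜 i b)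
end

section
/- Let A be a G-graded F-algebra. Then the multiplier algebra M(A) is G-graded by the subspaces M(A)_g: (i) every multiplier (R,L) ∈ M(A) can be written as a sum ∑_{g∈G} (R^{(g)}, L^{(g)}) with each (R^{(g)}, L^{(g)}) ∈ M(A)_g; (ii) this decomposition is direct, i.e., for every g ∈ G, M(A)_g ∩ ∑_{h∈G, h≠g} M(A)_h = {0}; and (iii) for all g,h ∈ G, if (R,L) ∈ M(A)_g and (R',L') ∈ M(A)_h then their product (R,L)·(R',L') = (R'∘R, L∘L') lies in M(A)_{gh}. -/
open DirectSum
set_option linter.unusedSectionVars false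

section aux

variable {F G A : Type*} [Field F] [Group G] [Fintype G] [DecidableEq G]
    [NonUnitalRing A] [Module F A] [SMulCommClass F A A] [IsScalarTower F A A]
    (𝒜 : G → Submodule F A) [DirectSum.Decomposition 𝒜]

/-- Projection onto the homogeneous component of degree `h`. -/
noncomputable def projAux (h : G) : A →ₗ[F] A :=
  (𝒜 h).subtype ∘ₗ (DFinsupp.lapply h) ∘ₗ (DirectSum.decomposeLinearEquiv 𝒜).toLinearMap

lemma projAux_apply (h : G) (a : A) : projAux 𝒜 h a = (DirectSum.decompose 𝒜 a h : A) := rfl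

lemma projAux_mem (h : G) (a : A) : projAux 𝒜 h a ∈ 𝒜 h := SetLike.coe_mem _

lemma projAux_of_mem_same {h : G} {a : A} (ha : a ∈ 𝒜 h) : projAux 𝒜 h a = a :=
  DirectSum.decompose_of_mem_same 𝒜 ha

lemma projAux_of_mem_ne {h k : G} {a : A} (ha : a ∈ 𝒜 h) (hne : h ≠ k) : projAux 𝒜 k a = 0 :=
  DirectSum.decompose_of_mem_ne 𝒜 ha hne

lemma sum_projAux (a : A) : ∑ h : G, projAux 𝒜 h a = a := by
  classical
  calc ∑ h : G, projAux 𝒜 h a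
      = ∑ h ∈ (DirectSum.decompose 𝒜 a).support, (DirectSum.decompose 𝒜 a h : A) :=
        (Finset.sum_subset (Finset.subset_univ _) fun h _ hh => by
          rw [projAux_apply, DFinsupp.notMem_support_iff.mp hh]; rfl).symm
    _ = a := DirectSum.sum_support_decompose 𝒜 a

lemma projAux_mul_left (hmul : ∀ (g h : G), ∀ a ∈ 𝒜 g, ∀ b ∈ 𝒜 h, a * b ∈ 𝒜 (g * h))
    {j : G} (m : G) {a : A} (x : A) (ha : a ∈ 𝒜 j) :
    projAux 𝒜 (j * m) (a * x) = a * projAux 𝒜 m x := by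
  conv_lhs => rw [← sum_projAux 𝒜 x, Finset.mul_sum, map_sum]
  rw [Finset.sum_eq_single_of_mem m (Finset.mem_univ m)
    (fun k _ hk => projAux_of_mem_ne 𝒜 (hmul j k a ha _ (projAux_mem 𝒜 k x))
      (fun h => hk (mul_left_cancel h)))]
  exact projAux_of_mem_same 𝒜 (hmul j m a ha _ (projAux_mem 𝒜 m x))

lemma projAux_mul_right (hmul : ∀ (g h : G), ∀ a ∈ 𝒜 g, ∀ b ∈ 𝒜 h, a * b ∈ 𝒜 (g * h)) {k : G} (m : G) {b : A} (x : A) (hb : b ∈ 𝒜 k) :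
    projAux 𝒜 (m * k) (x * b) = projAux 𝒜 m x * b := by
  conv_lhs => rw [← sum_projAux 𝒜 x, Finset.sum_mul, map_sum]
  rw [Finset.sum_eq_single_of_mem m (Finset.mem_univ m)
    (fun j _ hj => projAux_of_mem_ne 𝒜 (hmul j k _ (projAux_mem 𝒜 j x) b hb)
      (fun h => hj (mul_right_cancel h)))]
  exact projAux_of_mem_same 𝒜 (hmul m k _ (projAux_mem 𝒜 m x) b hb)

/-- Degree-`g` component of a right-multiplier map. -/
noncomputable def RgAux (R : A →ₗ[F] A) (g : G) : A →ₗ[F] A :=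
  ∑ h : G, projAux 𝒜 (h * g) ∘ₗ R ∘ₗ projAux 𝒜 h

/-- Degree-`g` component of a left-multiplier map. -/
noncomputable def LgAux (L : A →ₗ[F] A) (g : G) : A →ₗ[F] A :=
  ∑ h : G, projAux 𝒜 (g * h) ∘ₗ L ∘ₗ projAux 𝒜 h

lemma RgAux_of_mem (R : A →ₗ[F] A) (g : G) {j : G} {a : A} (ha : a ∈ 𝒜 j) :
    RgAux 𝒜 R g a = projAux 𝒜 (j * g) (R a) := by
  rw [RgAux, LinearMap.sum_apply]
  rw [Finset.sum_eq_single_of_mem j (Finset.mem_univ j)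
    (fun h _ hh => by
      simp [LinearMap.comp_apply, projAux_of_mem_ne 𝒜 ha (Ne.symm hh)])]
  simp [LinearMap.comp_apply, projAux_of_mem_same 𝒜 ha]

lemma LgAux_of_mem (L : A →ₗ[F] A) (g : G) {j : G} {a : A} (ha : a ∈ 𝒜 j) :
    LgAux 𝒜 L g a = projAux 𝒜 (g * j) (L a) := by
  rw [LgAux, LinearMap.sum_apply]
  rw [Finset.sum_eq_single_of_mem j (Finset.mem_univ j)
    (fun h _ hh => by
      simp [LinearMap.comp_apply, projAux_of_mem_ne 𝒜 ha (Ne.symm hh)])]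
  simp [LinearMap.comp_apply, projAux_of_mem_same 𝒜 ha]

lemma sum_RgAux (R : A →ₗ[F] A) : ∑ g : G, RgAux 𝒜 R g = R := by
  ext a
  rw [LinearMap.sum_apply]
  simp only [RgAux, LinearMap.sum_apply, LinearMap.comp_apply]
  rw [Finset.sum_comm]
  have : ∀ h : G, ∑ g : G, projAux 𝒜 (h * g) (R (projAux 𝒜 h a)) = R (projAux 𝒜 h a) := by
    intro h
    exact (Equiv.sum_comp (Equiv.mulLeft h)
      (fun k => projAux 𝒜 k (R (projAux 𝒜 h a)))).trans (sum_projAux 𝒜 _)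
  rw [Finset.sum_congr rfl fun h _ => this h, ← map_sum, sum_projAux]

lemma sum_LgAux (L : A →ₗ[F] A) : ∑ g : G, LgAux 𝒜 L g = L := by
  ext a
  rw [LinearMap.sum_apply]
  simp only [LgAux, LinearMap.sum_apply, LinearMap.comp_apply]
  rw [Finset.sum_comm]
  have : ∀ h : G, ∑ g : G, projAux 𝒜 (g * h) (L (projAux 𝒜 h a)) = L (projAux 𝒜 h a) := by
    intro h
    exact (Equiv.sum_comp (Equiv.mulRight h)
      (fun k => projAux 𝒜 k (L (projAux 𝒜 h a)))).trans (sum_projAux 𝒜 _)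
  rw [Finset.sum_congr rfl fun h _ => this h, ← map_sum, sum_projAux]

end aux


/-- The multiplier algebra `M(A)` of a `G`-graded `F`-algebra `A` is
`G`-graded by the subspaces `M(A)_g`: (i) every multiplier decomposes as a sum of
homogeneous multipliers, (ii) the decomposition is direct, and (iii) the product of
homogeneous multipliers of degrees `g` and `h` is homogeneous of degree `g * h`. -/
theorem stmt2 {F G A : Type*} [Field F] [Group G] [Fintype G] [DecidableEq G]
    [NonUnitalRing A] [Module F A] [SMulCommClass F A A] [IsScalarTower F A A]
    (𝒜 : G → Submodule F A) [DirectSum.Decomposition 𝒜]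
    (hmul : ∀ (g h : G), ∀ a ∈ 𝒜 g, ∀ b ∈ 𝒜 h, a * b ∈ 𝒜 (g * h))
    (IsMult : (A →ₗ[F] A) × (A →ₗ[F] A) → Prop)
    (hIsMult : ∀ p, IsMult p ↔
      (∀ a b : A, p.1 (a * b) = a * p.1 b) ∧ (∀ a b : A, p.2 (a * b) = p.2 a * b) ∧
        (∀ a b : A, p.1 a * b = a * p.2 b))
    (Mg : G → Set ((A →ₗ[F] A) × (A →ₗ[F] A)))
    (hMg : ∀ (g : G) (p), p ∈ Mg g ↔ IsMult p ∧
      ∀ h : G, ∀ a ∈ 𝒜 h, p.1 a ∈ 𝒜 (h * g) ∧ p.2 a ∈ 𝒜 (g * h)) :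
    -- (i) every multiplier is a sum of homogeneous components
    (∀ p, IsMult p →
      ∃ f : G → (A →ₗ[F] A) × (A →ₗ[F] A), (∀ g, f g ∈ Mg g) ∧ p = ∑ g : G, f g)
    -- (ii) the sum is direct
    ∧ (∀ (g : G) (p), p ∈ Mg g → ∀ q : G → (A →ₗ[F] A) × (A →ₗ[F] A),
        (∀ h, q h ∈ Mg h) → p = ∑ h ∈ Finset.univ.erase g, q h → p = 0)
    -- (iii) multiplicativity of the grading
    ∧ (∀ (g h : G) (p p'), p ∈ Mg g → p' ∈ Mg h →
        (p'.1.comp p.1, p.2.comp p'.2) ∈ Mg (g * h)) := by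
  refine ⟨?_, ?_, ?_⟩
  · -- (i)
    intro p hp
    rw [hIsMult] at hp
    obtain ⟨h1, h2, h3⟩ := hp
    refine ⟨fun g => (RgAux 𝒜 p.1 g, LgAux 𝒜 p.2 g), ?_, ?_⟩
    · intro g
      rw [hMg]
      -- homogeneous identities
      have key1 : ∀ (j k : G), ∀ a ∈ 𝒜 j, ∀ b ∈ 𝒜 k,
          RgAux 𝒜 p.1 g (a * b) = a * RgAux 𝒜 p.1 g b := by
        intro j k a ha b hb
        rw [RgAux_of_mem 𝒜 p.1 g (hmul j k a ha b hb), RgAux_of_mem 𝒜 p.1 g hb,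
          h1 a b, mul_assoc]
        exact projAux_mul_left 𝒜 hmul (k * g) (p.1 b) ha
      have key2 : ∀ (j k : G), ∀ a ∈ 𝒜 j, ∀ b ∈ 𝒜 k,
          LgAux 𝒜 p.2 g (a * b) = LgAux 𝒜 p.2 g a * b := by
        intro j k a ha b hb
        rw [LgAux_of_mem 𝒜 p.2 g (hmul j k a ha b hb), LgAux_of_mem 𝒜 p.2 g ha,
          h2 a b, ← mul_assoc]
        exact projAux_mul_right 𝒜 hmul (g * j) (p.2 a) hb
      have key3 : ∀ (j k : G), ∀ a ∈ 𝒜 j, ∀ b ∈ 𝒜 k,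
          RgAux 𝒜 p.1 g a * b = a * LgAux 𝒜 p.2 g b := by
        intro j k a ha b hb
        rw [RgAux_of_mem 𝒜 p.1 g ha, LgAux_of_mem 𝒜 p.2 g hb,
          ← projAux_mul_right 𝒜 hmul (j * g) (p.1 a) hb, h3 a b, mul_assoc]
        exact projAux_mul_left 𝒜 hmul (g * k) (p.2 b) ha
      constructor
      · rw [hIsMult]
        refine ⟨fun a b => ?_, fun a b => ?_, fun a b => ?_⟩
        · conv_lhs => rw [← sum_projAux 𝒜 a, ← sum_projAux 𝒜 b]
          conv_rhs => rw [← sum_projAux 𝒜 a, ← sum_projAux 𝒜 b]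
          simp only [Finset.sum_mul, Finset.mul_sum, map_sum]
          exact Finset.sum_congr rfl fun j _ => Finset.sum_congr rfl fun k _ =>
            key1 k j _ (projAux_mem 𝒜 k a) _ (projAux_mem 𝒜 j b)
        · conv_lhs => rw [← sum_projAux 𝒜 a, ← sum_projAux 𝒜 b]
          conv_rhs => rw [← sum_projAux 𝒜 a, ← sum_projAux 𝒜 b]
          simp only [Finset.sum_mul, Finset.mul_sum, map_sum]
          exact Finset.sum_congr rfl fun j _ => Finset.sum_congr rfl fun k _ =>
            key2 k j _ (projAux_mem 𝒜 k a) _ (projAux_mem 𝒜 j b)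
        · conv_lhs => rw [← sum_projAux 𝒜 a, ← sum_projAux 𝒜 b]
          conv_rhs => rw [← sum_projAux 𝒜 a, ← sum_projAux 𝒜 b]
          simp only [Finset.sum_mul, Finset.mul_sum, map_sum]
          exact Finset.sum_congr rfl fun j _ => Finset.sum_congr rfl fun k _ =>
            key3 k j _ (projAux_mem 𝒜 k a) _ (projAux_mem 𝒜 j b)
      · intro h a ha
        exact ⟨by rw [RgAux_of_mem 𝒜 p.1 g ha]; exact projAux_mem 𝒜 _ _,
          by rw [LgAux_of_mem 𝒜 p.2 g ha]; exact projAux_mem 𝒜 _ _⟩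
    · refine Prod.ext ?_ ?_
      · rw [Prod.fst_sum]
        exact (sum_RgAux 𝒜 p.1).symm
      · rw [Prod.snd_sum]
        exact (sum_LgAux 𝒜 p.2).symm
  · -- (ii)
    intro g p hp q hq hsum
    rw [hMg] at hp
    have hR : ∀ k : G, ∀ a ∈ 𝒜 k, p.1 a = 0 := by
      intro k a ha
      have hmem : p.1 a ∈ 𝒜 (k * g) := (hp.2 k a ha).1
      have e1 : p.1 a = ∑ h ∈ Finset.univ.erase g, (q h).1 a := by
        rw [hsum, Prod.fst_sum, LinearMap.sum_apply]
      have e2 : projAux 𝒜 (k * g) (p.1 a) = 0 := by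
        rw [e1, map_sum]
        refine Finset.sum_eq_zero fun h hh => ?_
        have hne : h ≠ g := (Finset.mem_erase.mp hh).1
        exact projAux_of_mem_ne 𝒜 (((hMg h (q h)).mp (hq h)).2 k a ha).1
          fun hc => hne (mul_left_cancel hc)
      rw [← projAux_of_mem_same 𝒜 hmem, e2]
    have hL : ∀ k : G, ∀ a ∈ 𝒜 k, p.2 a = 0 := by
      intro k a ha
      have hmem : p.2 a ∈ 𝒜 (g * k) := (hp.2 k a ha).2
      have e1 : p.2 a = ∑ h ∈ Finset.univ.erase g, (q h).2 a := by
        rw [hsum, Prod.snd_sum, LinearMap.sum_apply]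
      have e2 : projAux 𝒜 (g * k) (p.2 a) = 0 := by
        rw [e1, map_sum]
        refine Finset.sum_eq_zero fun h hh => ?_
        have hne : h ≠ g := (Finset.mem_erase.mp hh).1
        exact projAux_of_mem_ne 𝒜 (((hMg h (q h)).mp (hq h)).2 k a ha).2
          fun hc => hne (mul_right_cancel hc)
      rw [← projAux_of_mem_same 𝒜 hmem, e2]
    refine Prod.ext ?_ ?_
    · refine LinearMap.ext fun a => ?_
      conv_lhs => rw [← sum_projAux 𝒜 a, map_sum]
      exact Finset.sum_eq_zero fun k _ => hR k _ (projAux_mem 𝒜 k a)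
    · refine LinearMap.ext fun a => ?_
      conv_lhs => rw [← sum_projAux 𝒜 a, map_sum]
      exact Finset.sum_eq_zero fun k _ => hL k _ (projAux_mem 𝒜 k a)
  · -- (iii)
    intro g h p p' hp hp'
    rw [hMg] at hp hp' ⊢
    obtain ⟨hpm, hpd⟩ := hp
    obtain ⟨hp'm, hp'd⟩ := hp'
    rw [hIsMult] at hpm hp'm
    constructor
    · rw [hIsMult]
      refine ⟨fun a b => ?_, fun a b => ?_, fun a b => ?_⟩
      · simp only [LinearMap.comp_apply, hpm.1, hp'm.1]
      · simp only [LinearMap.comp_apply, hp'm.2.1, hpm.2.1]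
      · simp only [LinearMap.comp_apply]
        rw [hp'm.2.2, hpm.2.2]
    · intro k a ha
      constructor
      · have h1 := (hp'd (k * g) _ (hpd k a ha).1).1
        simpa [mul_assoc] using h1
      · have h2 := (hpd (h * k) _ (hp'd k a ha).2).2
        simpa [mul_assoc] using h2
end

section
/- For every n ≥ 1 and for γ = (0,0,…,0) ∈ {0,1}ⁿ (all variables of even degree), one has dim_F V_{UT₂}(γ) = 2ⁿ + 2, where the acting subalgebra is B = UT₂ itself. -/
noncomputable section

/-- The algebra of `2 × 2` matrices over `F` (ambient algebra for `UT₂`). -/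
abbrev M2 (F : Type*) [Field F] := Matrix (Fin 2) (Fin 2) F

/-- The matrix unit `e₁₁`. -/
def e11 (F : Type*) [Field F] : M2 F := Matrix.single 0 0 1

/-- The matrix unit `e₁₂`. -/
def e12 (F : Type*) [Field F] : M2 F := Matrix.single 0 1 1

/-- The matrix unit `e₂₂`. -/
def e22 (F : Type*) [Field F] : M2 F := Matrix.single 1 1 1

/-- The homogeneous components of the canonical `ℤ₂`-grading of `UT₂`:
`UT₂⁰ = F e₁₁ ⊕ F e₂₂` and `UT₂¹ = F e₁₂`. -/
def utComp (F : Type*) [Field F] (b : Bool) : Submodule F (M2 F) :=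
  if b then Submodule.span F {e12 F} else Submodule.span F {e11 F, e22 F}

/-- `UT₂`, the set of `2 × 2` upper triangular matrices. -/
def UTset (F : Type*) [Field F] : Set (M2 F) := {M | M 1 0 = 0}

/-- The space `V_B(γ)`: the `F`-span of all functions
`(x₁,…,xₙ) ↦ b₀ x_{σ(1)} b₁ x_{σ(2)} ⋯ b_{n-1} x_{σ(n)} bₙ` with `σ` a permutation and
`b₀,…,bₙ ∈ B`, defined on the homogeneous components prescribed by `γ ∈ {0,1}ⁿ`. -/
def Vspan (F : Type*) [Field F] (B : Set (M2 F)) {n : ℕ} (γ : Fin n → Bool) :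
    Submodule F ((∀ i : Fin n, ↥(utComp F (γ i))) → M2 F) :=
  Submodule.span F
    {f | ∃ (σ : Equiv.Perm (Fin n)) (b : Fin (n + 1) → M2 F),
      (∀ i, b i ∈ B) ∧
      f = fun x => b 0 * (List.ofFn fun i : Fin n => ((x (σ i) : M2 F) * b i.succ)).prod}

/-!
Write an even variable as `xᵢ = aᵢ e₁₁ + dᵢ e₂₂`. Every spanning map of `V_{UT₂}(0,…,0)` is
multilinear, so it expands in the monomials `m_S(x) = ∏_{i ∈ S} aᵢ ∏_{i ∉ S} dᵢ`, `S ⊆ {1,…,n}`,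
with coefficient its value at the tuple `xᵢ = e₁₁ (i ∈ S)`, `xᵢ = e₂₂ (i ∉ S)`. That value is a
product of upper triangular matrices with a factor `e₂₂` (unless `S` is everything) and a factor
`e₁₁` (unless `S` is empty), so its `(1,1)`-entry, resp. its `(2,2)`-entry, vanishes. Hence `V` lies
in the span of `m_{[n]} e₁₁`, `m_∅ e₂₂` and the `2ⁿ` maps `m_S e₁₂`. Conversely these are spanning
maps themselves: `e₁₁ x₁ ⋯ xₙ`, `e₂₂ x₁ ⋯ xₙ`, and `x_{σ(1)} ⋯ x_{σ(k)} e₁₂ x_{σ(k+1)} ⋯ x_{σ(n)}`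
for a permutation `σ` listing `S` first. Evaluating at the tuples of matrix units shows that these
`2ⁿ + 2` maps are linearly independent.
-/

namespace UT2

open Matrix

variable {F : Type*} [Field F] {n : ℕ}

local notation "𝔻" => (utComp F false : Type _)

variable (F) in
def upperSubmonoid : Submonoid (M2 F) where
  carrier := UTset F
  one_mem' := by simp [UTset]
  mul_mem' {M N} hM hN := by simp_all [UTset, mul_apply, Fin.sum_univ_two]

lemma mul_apply_self_of_mem_UTset {M N : M2 F} (hM : M ∈ UTset F) (hN : N ∈ UTset F)
    (p : Fin 2) : (M * N) p p = M p p * N p p := by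
  fin_cases p <;> simp_all [UTset, mul_apply, Fin.sum_univ_two]

lemma list_prod_apply_self {L : List (M2 F)} (hL : ∀ M ∈ L, M ∈ UTset F) (p : Fin 2) :
    L.prod p p = (L.map (· p p)).prod := by
  induction L with
  | nil => simp
  | cons M L ih =>
    rw [List.forall_mem_cons] at hL
    rw [List.prod_cons, mul_apply_self_of_mem_UTset hL.1
      (Submonoid.list_prod_mem (upperSubmonoid F) hL.2), ih hL.2, List.map_cons, List.prod_cons]

lemma mem_utComp_false_iff_isDiag {M : M2 F} : M ∈ utComp F false ↔ M.IsDiag := by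
  rw [utComp, if_neg Bool.false_ne_true, Submodule.mem_span_pair]
  constructor
  · rintro ⟨a, d, rfl⟩ i j hij
    fin_cases i <;> fin_cases j <;> simp_all [e11, e22]
  · intro hM
    refine ⟨M 0 0, M 1 1, ?_⟩
    ext i j
    fin_cases i <;> fin_cases j <;> simp [e11, e22, hM (i := 0) (j := 1), hM (i := 1) (j := 0)]

lemma isDiag_coe (y : 𝔻) : (y : M2 F).IsDiag :=
  mem_utComp_false_iff_isDiag.1 y.2

lemma coe_mem_UTset (y : 𝔻) : (y : M2 F) ∈ UTset F :=
  isDiag_coe y (by decide)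

variable (F) in
def evenUnit (t : Bool) : 𝔻 :=
  ⟨if t then e11 F else e22 F, mem_utComp_false_iff_isDiag.2 <| by
    intro i j hij; cases t <;> fin_cases i <;> fin_cases j <;> simp_all [e11, e22]⟩

lemma eq_smul_evenUnit_add (y : 𝔻) :
    y = (y : M2 F) 0 0 • evenUnit F true + (y : M2 F) 1 1 • evenUnit F false := by
  have hy := isDiag_coe y
  ext i j
  fin_cases i <;> fin_cases j <;>
    simp [evenUnit, e11, e22, hy (i := 0) (j := 1), hy (i := 1) (j := 0)]

variable (F) in
def evenUnits (S : Fin n → Bool) : Fin n → 𝔻 := fun i => evenUnit F (S i)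

def monomial (S : Fin n → Bool) (x : Fin n → 𝔻) : F :=
  ∏ i, if S i then (x i : M2 F) 0 0 else (x i : M2 F) 1 1

lemma monomial_evenUnits (S T : Fin n → Bool) :
    monomial S (evenUnits F T) = if S = T then 1 else 0 := by
  have h (i : Fin n) : (if S i then (evenUnits F T i : M2 F) 0 0
      else (evenUnits F T i : M2 F) 1 1) = if S i = T i then 1 else 0 := by
    cases S i <;> cases hT : T i <;> simp [evenUnits, evenUnit, e11, e22, hT]
  simp only [monomial, h, Finset.prod_boole, Finset.mem_univ, forall_const, funext_iff]

lemma apply_eq_sum_monomial {M : Type*} [AddCommGroup M] [Module F M]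
    (f : MultilinearMap F (fun _ : Fin n => 𝔻) M) (x : Fin n → 𝔻) :
    f x = ∑ S, monomial S x • f (evenUnits F S) := by
  have hx : x = fun i => ∑ t : Bool,
      (if t then (x i : M2 F) 0 0 else (x i : M2 F) 1 1) • evenUnit F t := by
    funext i
    rw [Fintype.sum_bool, if_pos rfl, if_neg Bool.false_ne_true]
    exact eq_smul_evenUnit_add (x i)
  conv_lhs => rw [hx, MultilinearMap.map_sum]
  simp only [monomial, MultilinearMap.map_smul_univ]
  rfl

def monomialSingle : (Fin n → Bool) × Fin 2 × Fin 2 → (Fin n → 𝔻) → M2 F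
  | (S, p, q) => fun x => monomial S x • single p q 1

lemma linearIndependent_monomialSingle :
    LinearIndependent F (monomialSingle (F := F) (n := n)) := by
  let coords : ((Fin n → 𝔻) → M2 F) →ₗ[F] ((Fin n → Bool) × Fin 2 × Fin 2 → F) :=
    { toFun := fun f c => f (evenUnits F c.1) c.2.1 c.2.2
      map_add' := fun _ _ => rfl
      map_smul' := fun _ _ => rfl }
  refine LinearIndependent.of_comp coords ?_
  convert (Pi.basisFun F ((Fin n → Bool) × Fin 2 × Fin 2)).linearIndependent
  ext ⟨S, p, q⟩ ⟨T, p', q'⟩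
  change monomial S (evenUnits F T) • (single p q (1 : F)) p' q' = _
  simp only [monomial_evenUnits, single_apply, Pi.basisFun_apply, Pi.single_apply,
    Prod.ext_iff, smul_eq_mul]
  grind

def basisIndex : Bool ⊕ (Fin n → Bool) → (Fin n → Bool) × Fin 2 × Fin 2
  | .inl true => (fun _ => true, 0, 0)
  | .inl false => (fun _ => false, 1, 1)
  | .inr S => (S, 0, 1)

lemma basisIndex_injective : Function.Injective (basisIndex (n := n)) := by
  rintro ((_ | _) | S) ((_ | _) | T) h <;> simp_all [basisIndex, Prod.ext_iff]

lemma smul_mem_span_basis (S : Fin n → Bool) {M : M2 F} (hM : M ∈ UTset F)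
    (h0 : ∀ i, S i = false → M 0 0 = 0) (h1 : ∀ i, S i = true → M 1 1 = 0) :
    (fun x => monomial S x • M) ∈ Submodule.span F (Set.range (monomialSingle ∘ basisIndex)) := by
  have hsum : (fun x => monomial S x • M) = ∑ p, ∑ q, M p q • monomialSingle (S, p, q) := by
    funext x
    conv_lhs => rw [matrix_eq_sum_single M]
    simp [monomialSingle, mul_comm]
  rw [hsum]
  refine Submodule.sum_mem _ fun p _ => Submodule.sum_mem _ fun q _ => ?_
  by_cases hpq : M p q = 0
  · simp [hpq]
  refine Submodule.smul_mem _ _ (Submodule.subset_span ?_)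
  fin_cases p <;> fin_cases q
  · have hS : (fun _ => true) = S :=
      funext fun i => by_contra fun h => hpq (h0 i (Bool.eq_false_iff.2 (Ne.symm h)))
    exact ⟨.inl true, by simp [basisIndex, hS]⟩
  · exact ⟨.inr S, rfl⟩
  · exact absurd hM hpq
  · have hS : (fun _ => false) = S :=
      funext fun i => by_contra fun h => hpq (h1 i (Bool.eq_true_of_not_eq_false (Ne.symm h)))
    exact ⟨.inl false, by simp [basisIndex, hS]⟩

def generator (b : Fin (n + 1) → M2 F) (σ : Equiv.Perm (Fin n)) :
    MultilinearMap F (fun _ : Fin n => 𝔻) (M2 F) :=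
  (LinearMap.mulLeft F (b 0)).compMultilinearMap
    (((MultilinearMap.mkPiAlgebraFin F n (M2 F)).compLinearMap
      (fun i => (LinearMap.mulRight F (b i.succ)).comp (utComp F false).subtype)).domDomCongr σ)

lemma generator_apply (b : Fin (n + 1) → M2 F) (σ : Equiv.Perm (Fin n)) (x : Fin n → 𝔻) :
    generator b σ x = b 0 * (List.ofFn fun i => (x (σ i) : M2 F) * b i.succ).prod := by
  simp [generator]

section upper

variable {b : Fin (n + 1) → M2 F} (hb : ∀ i, b i ∈ UTset F) (σ : Equiv.Perm (Fin n))
  (x : Fin n → ↥(utComp F false))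
include hb

lemma generator_factors_mem_UTset :
    ∀ M ∈ (b 0 :: List.ofFn fun i => (x (σ i) : M2 F) * b i.succ), M ∈ UTset F := by
  simp only [List.forall_mem_cons, List.forall_mem_ofFn_iff]
  exact ⟨hb 0, fun i => (upperSubmonoid F).mul_mem (coe_mem_UTset (x (σ i))) (hb i.succ)⟩

lemma generator_apply_mem_UTset : generator b σ x ∈ UTset F := by
  rw [generator_apply, ← List.prod_cons]
  exact Submonoid.list_prod_mem (upperSubmonoid F) (generator_factors_mem_UTset hb σ x)

lemma generator_apply_self_eq_zero {p : Fin 2} {j : Fin n} (hj : (x j : M2 F) p p = 0) :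
    generator b σ x p p = 0 := by
  rw [generator_apply, ← List.prod_cons,
    list_prod_apply_self (generator_factors_mem_UTset hb σ x)]
  refine List.prod_eq_zero (List.mem_map.2 ⟨_, List.mem_cons_of_mem _
    (List.mem_ofFn.2 ⟨σ.symm j, rfl⟩), ?_⟩)
  rw [mul_apply_self_of_mem_UTset (coe_mem_UTset _) (hb _), Equiv.apply_symm_apply, hj, zero_mul]

end upper

lemma vspan_le_span_basis :
    Vspan F (UTset F) (fun _ : Fin n => false)
      ≤ Submodule.span F (Set.range (monomialSingle ∘ basisIndex)) := by
  rw [Vspan, Submodule.span_le]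
  rintro f ⟨σ, b, hb, rfl⟩
  have hexp : (fun x : Fin n → 𝔻 => b 0 * (List.ofFn fun i => (x (σ i) : M2 F) * b i.succ).prod)
      = ∑ S, fun x => monomial S x • generator b σ (evenUnits F S) := by
    funext x
    rw [Finset.sum_apply, ← generator_apply, apply_eq_sum_monomial (generator b σ)]
  rw [SetLike.mem_coe, hexp]
  refine Submodule.sum_mem _ fun S _ =>
    smul_mem_span_basis S (generator_apply_mem_UTset hb σ _) (fun i hi => ?_) (fun i hi => ?_)
  · exact generator_apply_self_eq_zero hb σ _ (j := i) (by simp [evenUnits, evenUnit, hi, e22])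
  · exact generator_apply_self_eq_zero hb σ _ (j := i) (by simp [evenUnits, evenUnit, hi, e11])

lemma _root_.Matrix.diagonal_mul_single_one {m R : Type*} [Fintype m] [DecidableEq m]
    [CommSemiring R] (d : m → R) (i j : m) : diagonal d * single i j 1 = d i • single i j 1 := by
  ext a b
  by_cases ha : i = a <;> simp [diagonal_mul, single_apply, ha]

lemma _root_.Matrix.single_one_mul_diagonal {m R : Type*} [Fintype m] [DecidableEq m]
    [CommSemiring R] (d : m → R) (i j : m) : single i j 1 * diagonal d = d j • single i j 1 := by
  ext a b
  by_cases hb : j = b <;> simp [mul_diagonal, single_apply, hb]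

def singleAt (k : Fin (n + 1)) (p q : Fin 2) : Fin (n + 1) → M2 F :=
  Function.update 1 k (single p q 1)

@[simp] lemma singleAt_self (k : Fin (n + 1)) (p q : Fin 2) :
    singleAt (F := F) k p q k = single p q 1 :=
  Function.update_self ..

@[simp] lemma singleAt_of_ne {k j : Fin (n + 1)} (h : j ≠ k) (p q : Fin 2) :
    singleAt (F := F) k p q j = 1 :=
  Function.update_of_ne h ..

@[simp] lemma singleAt_succ_succ (k j : Fin (n + 1)) (p q : Fin 2) :
    singleAt (F := F) k.succ p q j.succ = singleAt k p q j := by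
  simp [singleAt, Function.update_apply]

lemma singleAt_mul_prod_ofFn (d : Fin n → Fin 2 → F) (k : Fin (n + 1)) (p q : Fin 2) :
    singleAt k p q 0 * (List.ofFn fun i => diagonal (d i) * singleAt k p q i.succ).prod
    = (∏ i, if i.castSucc < k then d i p else d i q) • single p q 1 := by
  induction n with
  | zero => rw [Fin.fin_one_eq_zero k]; simp
  | succ n ih =>
    rw [List.ofFn_succ, List.prod_cons, Fin.prod_univ_succ]
    cases k using Fin.cases with
    | zero =>
      have h := ih (fun i => d i.succ) 0
      simp only [singleAt_self, singleAt_of_ne (Fin.succ_ne_zero _), mul_one] at h ⊢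
      rw [← mul_assoc, single_one_mul_diagonal, smul_mul_assoc, h, smul_smul]
      simp
    | succ k =>
      have h := ih (fun i => d i.succ) k
      simp only [singleAt_of_ne (Fin.succ_ne_zero _).symm, singleAt_succ_succ, one_mul]
      rw [mul_assoc, h, mul_smul_comm, diagonal_mul_single_one, smul_smul]
      simp [mul_comm]

lemma exists_perm_castSucc_lt_iff (S : Fin n → Bool) :
    ∃ (σ : Equiv.Perm (Fin n)) (k : Fin (n + 1)), ∀ i, i.castSucc < k ↔ S (σ i) = true := by
  classical
  set m := Fintype.card {j // S j = true}
  have hm : m ≤ n := by simpa using Fintype.card_subtype_le fun j => S j = true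
  let e : {i : Fin n // (i : ℕ) < m} ≃ {j // S j = true} :=
    Fintype.equivOfCardEq (Fintype.card_fin_lt_of_le hm)
  refine ⟨e.extendSubtype, ⟨m, by omega⟩, fun i => ?_⟩
  rw [Fin.lt_def, Fin.val_castSucc]
  exact ⟨e.extendSubtype_mem i, fun h => by_contra fun hi => e.extendSubtype_not_mem i hi h⟩

lemma generator_singleAt_apply (σ : Equiv.Perm (Fin n)) (k : Fin (n + 1)) (p q : Fin 2)
    (x : Fin n → 𝔻) :
    generator (singleAt k p q) σ x
      = (∏ i, if i.castSucc < k then (x (σ i) : M2 F) p p else (x (σ i) : M2 F) q q)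
        • single p q 1 := by
  have h := singleAt_mul_prod_ofFn (fun i => (x (σ i) : M2 F).diag) k p q
  simp only [(isDiag_coe _).diagonal_diag, diag_apply] at h
  rw [generator_apply, h]

lemma generator_singleAt_mem_vspan (σ : Equiv.Perm (Fin n)) (k : Fin (n + 1)) {p q : Fin 2}
    (hpq : p ≤ q) :
    ⇑(generator (singleAt k p q) σ) ∈ Vspan F (UTset F) (fun _ : Fin n => false) := by
  refine Submodule.subset_span ⟨σ, singleAt k p q, fun j => ?_, funext (generator_apply _ σ)⟩
  by_cases hj : j = k
  · subst hj
    fin_cases p <;> fin_cases q <;> simp_all [UTset]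
  · simp [singleAt_of_ne hj, UTset]

lemma monomialSingle_basisIndex_mem_vspan (idx : Bool ⊕ (Fin n → Bool)) :
    monomialSingle (basisIndex idx) ∈ Vspan F (UTset F) (fun _ : Fin n => false) := by
  rcases idx with (_ | _) | S
  · convert generator_singleAt_mem_vspan 1 0 (le_refl (1 : Fin 2)) using 1
    funext x
    simp [generator_singleAt_apply, monomialSingle, basisIndex, monomial]
  · convert generator_singleAt_mem_vspan 1 0 (le_refl (0 : Fin 2)) using 1
    funext x
    simp [generator_singleAt_apply, monomialSingle, basisIndex, monomial]
  · obtain ⟨σ, k, hk⟩ := exists_perm_castSucc_lt_iff S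
    convert generator_singleAt_mem_vspan σ k (zero_le_one' (Fin 2)) using 1
    funext x
    simp only [generator_singleAt_apply, hk]
    exact congrArg (· • _) (Equiv.prod_comp σ fun j => _).symm

end UT2

theorem stmt9_general (F : Type*) [Field F] (n : ℕ) :
    Module.finrank F ↥(Vspan F (UTset F) (fun _ : Fin n => false)) = 2 ^ n + 2 := by
  have hV : Vspan F (UTset F) (fun _ : Fin n => false)
      = Submodule.span F (Set.range (UT2.monomialSingle ∘ UT2.basisIndex)) :=
    le_antisymm UT2.vspan_le_span_basis
      (Submodule.span_le.2 (Set.range_subset_iff.2 UT2.monomialSingle_basisIndex_mem_vspan))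
  rw [hV, finrank_span_eq_card
    (UT2.linearIndependent_monomialSingle.comp _ UT2.basisIndex_injective)]
  simp [add_comm]

/-- For every `n ≥ 1` and `γ = (0,…,0)` (all variables even), with the
acting subalgebra `B = UT₂` itself, `dim V_{UT₂}(γ) = 2ⁿ + 2`. -/
theorem stmt9 (F : Type*) [Field F] [CharZero F] (n : ℕ) (hn : 1 ≤ n) :
    Module.finrank F ↥(Vspan F (UTset F) (fun _ : Fin n => false)) = 2 ^ n + 2 :=
  stmt9_general F n
end
end

section
/- For every n ≥ 1, the n-th generalized graded codimension of UT₂ with its canonical ℤ₂-grading and with the action of B = UT₂ itself by left and right multiplication is c_n^{UT₂} = 2^{n−1}(n+2) + 2. -/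
/-!
A generator `b₀ x_{σ1} b₁ ⋯ x_{σn} bₙ` of `V_B(γ)` is upper triangular: its diagonal entries are
the products of the corresponding diagonal entries of the factors, and its corner entry `M 0 1`
is a sum over the factor whose corner entry is used, weighted by the upper-left entries of the
factors before it and the lower-right entries of those after it. An odd variable has zero
diagonal, so `V(γ) = 0` when `γ` has two odd variables. With a single odd variable `x_t` only the
terms through `x_t` survive, and `V(γ)` is spanned by the `2^{n-1}` functions
`x ↦ (x_t 0 1 * ∏_{i ≠ t} (a diagonal entry of x_i)) • e₁₂`; with no odd variable it is spanned
by the `2^n` functions `x ↦ (∏_i (a diagonal entry of x_i)) • e₁₂` together with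
`(∏ x_i 0 0) • e₁₁` and `(∏ x_i 1 1) • e₂₂`. Each of these is a generator: sort the variables
by the chosen entries and take `b_j ∈ {1, e₁₁, e₂₂, e₁₂}`. Evaluating at tuples of matrix units
isolates them one at a time, so they are linearly independent. Summing over `γ`,
`c_n = (2^n + 2) + n 2^{n-1}`.
-/

noncomputable section

namespace UT2

variable {F : Type*} [Field F] {n : ℕ} {γ : Fin n → Bool}

lemma mem_UTset {M : M2 F} : M ∈ UTset F ↔ M 1 0 = 0 := Iff.rfl

section Entries

variable {A B : M2 F}

lemma mul_apply_zero_one : (A * B) 0 1 = A 0 0 * B 0 1 + A 0 1 * B 1 1 := by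
  simp [Matrix.mul_apply, Fin.sum_univ_two]

lemma mul_apply_zero_zero (hB : B ∈ UTset F) : (A * B) 0 0 = A 0 0 * B 0 0 := by
  simp [Matrix.mul_apply, Fin.sum_univ_two, mem_UTset.1 hB]

lemma mul_apply_one_one (hA : A ∈ UTset F) : (A * B) 1 1 = A 1 1 * B 1 1 := by
  simp [Matrix.mul_apply, Fin.sum_univ_two, mem_UTset.1 hA]

lemma mul_mem_UTset (hA : A ∈ UTset F) (hB : B ∈ UTset F) : A * B ∈ UTset F := by
  simp [mem_UTset, Matrix.mul_apply, Fin.sum_univ_two, mem_UTset.1 hA, mem_UTset.1 hB]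

lemma eq_of_mem_UTset (hA : A ∈ UTset F) :
    A = A 0 0 • e11 F + A 0 1 • e12 F + A 1 1 • e22 F := by
  ext i j
  fin_cases i <;> fin_cases j <;> simp [e11, e12, e22, Matrix.single, mem_UTset.1 hA]

end Entries

section Products

variable {m : ℕ}

def cutProd (w : Fin m → M2 F) (c : ℕ) : F :=
  ∏ i : Fin m, if (i : ℕ) < c then w i 0 0 else w i 1 1

/-- The term of the `(0,1)` entry of `w 0 * ⋯ * w (m-1)` coming from the off-diagonal entry
of the factor `w j`. -/
def pathProd (w : Fin m → M2 F) (j : ℕ) : F :=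
  ∏ i : Fin m, if (i : ℕ) < j then w i 0 0 else if (i : ℕ) = j then w i 0 1 else w i 1 1

lemma cutProd_castSucc (w : Fin (m + 1) → M2 F) {c : ℕ} (h : c ≤ m) :
    cutProd w c = cutProd (fun i => w i.castSucc) c * w (Fin.last m) 1 1 := by
  simp [cutProd, Fin.prod_univ_castSucc, h.not_gt]

lemma pathProd_castSucc (w : Fin (m + 1) → M2 F) {j : ℕ} (h : j < m) :
    pathProd w j = pathProd (fun i => w i.castSucc) j * w (Fin.last m) 1 1 := by
  simp [pathProd, Fin.prod_univ_castSucc, h.not_gt, h.ne']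

lemma pathProd_last (w : Fin (m + 1) → M2 F) :
    pathProd w m = (∏ i : Fin m, w i.castSucc 0 0) * w (Fin.last m) 0 1 := by
  simp [pathProd, Fin.prod_univ_castSucc]

lemma cutProd_of_le (w : Fin m → M2 F) {c : ℕ} (h : m ≤ c) : cutProd w c = ∏ i, w i 0 0 :=
  Finset.prod_congr rfl fun i _ => if_pos (by omega)

lemma pathProd_eq_zero (w : Fin m → M2 F) (j : Fin m) (h : w j 0 1 = 0) : pathProd w j = 0 :=
  Finset.prod_eq_zero (Finset.mem_univ j) (by simp [h])

lemma cutProd_eq_zero (w : Fin m → M2 F) (c : ℕ) {k : Fin m} (h₀ : w k 0 0 = 0)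
    (h₁ : w k 1 1 = 0) : cutProd w c = 0 :=
  Finset.prod_eq_zero (Finset.mem_univ k) (by simp [h₀, h₁])

lemma pathProd_eq_zero_of_ne (w : Fin m → M2 F) {j : ℕ} {k : Fin m} (hk : (k : ℕ) ≠ j)
    (h₀ : w k 0 0 = 0) (h₁ : w k 1 1 = 0) : pathProd w j = 0 :=
  Finset.prod_eq_zero (Finset.mem_univ k) (by simp [hk, h₀, h₁])

end Products

section Generator

def interleavedProd (b : Fin (n + 1) → M2 F) (y : Fin n → M2 F) : M2 F :=
  b 0 * (List.ofFn fun i => y i * b i.succ).prod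

lemma interleavedProd_zero (b : Fin 1 → M2 F) (y : Fin 0 → M2 F) : interleavedProd b y = b 0 := by
  simp [interleavedProd]

lemma interleavedProd_succ (b : Fin (n + 2) → M2 F) (y : Fin (n + 1) → M2 F) :
    interleavedProd b y = interleavedProd (fun j => b j.castSucc) (fun i => y i.castSucc) *
      (y (Fin.last n) * b (Fin.last (n + 1))) := by
  simp only [interleavedProd, List.ofFn_succ', List.prod_concat, Fin.succ_castSucc, Fin.succ_last,
    Fin.castSucc_zero, mul_assoc]

variable {b : Fin (n + 1) → M2 F} {y : Fin n → M2 F}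

lemma interleavedProd_mem_UTset (hb : ∀ j, b j ∈ UTset F) (hy : ∀ i, y i ∈ UTset F) :
    interleavedProd b y ∈ UTset F := by
  induction n with
  | zero => simpa [interleavedProd_zero] using hb 0
  | succ n ih =>
    rw [interleavedProd_succ]
    exact mul_mem_UTset (ih (fun _ => hb _) (fun _ => hy _)) (mul_mem_UTset (hy _) (hb _))

lemma interleavedProd_zero_zero (hb : ∀ j, b j ∈ UTset F) (hy : ∀ i, y i ∈ UTset F) :
    interleavedProd b y 0 0 = (∏ j, b j 0 0) * ∏ i, y i 0 0 := by
  induction n with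
  | zero => simp [interleavedProd_zero]
  | succ n ih =>
    rw [interleavedProd_succ, mul_apply_zero_zero (mul_mem_UTset (hy _) (hb _)),
      mul_apply_zero_zero (hb _), ih (fun _ => hb _) (fun _ => hy _),
      Fin.prod_univ_castSucc (f := fun j => b j 0 0),
      Fin.prod_univ_castSucc (f := fun i => y i 0 0)]
    ring

lemma interleavedProd_one_one (hb : ∀ j, b j ∈ UTset F) (hy : ∀ i, y i ∈ UTset F) :
    interleavedProd b y 1 1 = (∏ j, b j 1 1) * ∏ i, y i 1 1 := by
  induction n with
  | zero => simp [interleavedProd_zero]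
  | succ n ih =>
    rw [interleavedProd_succ,
      mul_apply_one_one (interleavedProd_mem_UTset (fun _ => hb _) (fun _ => hy _)),
      mul_apply_one_one (hy _), ih (fun _ => hb _) (fun _ => hy _),
      Fin.prod_univ_castSucc (f := fun j => b j 1 1),
      Fin.prod_univ_castSucc (f := fun i => y i 1 1)]
    ring

lemma interleavedProd_zero_one (hb : ∀ j, b j ∈ UTset F) (hy : ∀ i, y i ∈ UTset F) :
    interleavedProd b y 0 1 = ∑ j : Fin (n + 1), pathProd b j * cutProd y j +
      ∑ j : Fin n, cutProd b (j + 1) * pathProd y j := by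
  induction n with
  | zero => simp [interleavedProd_zero, pathProd, cutProd]
  | succ n ih =>
    have hA (j : Fin (n + 1)) : pathProd b j.castSucc * cutProd y j.castSucc =
        pathProd (fun j => b j.castSucc) j * cutProd (fun i => y i.castSucc) j *
          (y (Fin.last n) 1 1 * b (Fin.last (n + 1)) 1 1) := by
      rw [Fin.val_castSucc, pathProd_castSucc b (by omega), cutProd_castSucc y (by omega)]
      ring
    have hB (j : Fin n) : cutProd b (j.castSucc + 1) * pathProd y j.castSucc =
        cutProd (fun j => b j.castSucc) (j + 1) * pathProd (fun i => y i.castSucc) j *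
          (y (Fin.last n) 1 1 * b (Fin.last (n + 1)) 1 1) := by
      rw [Fin.val_castSucc, cutProd_castSucc b (by omega), pathProd_castSucc y (by omega)]
      ring
    rw [interleavedProd_succ, mul_apply_zero_one, mul_apply_zero_one, mul_apply_one_one (hy _),
      interleavedProd_zero_zero (fun _ => hb _) (fun _ => hy _), ih (fun _ => hb _) (fun _ => hy _),
      Fin.sum_univ_castSucc (f := fun j => pathProd b j * cutProd y j),
      Fin.sum_univ_castSucc (f := fun j => cutProd b (j + 1) * pathProd y j),
      Finset.sum_congr rfl fun j _ => hA j, Finset.sum_congr rfl fun j _ => hB j,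
      ← Finset.sum_mul, ← Finset.sum_mul, Fin.val_last, Fin.val_last, pathProd_last,
      cutProd_of_le y le_rfl, cutProd_castSucc b le_rfl, cutProd_of_le _ le_rfl,
      pathProd_last, Fin.prod_univ_castSucc (f := fun i => y i 0 0)]
    ring

end Generator

section Graded

variable {M : M2 F}

lemma eq_smul_e12_of_mem_utComp_true (h : M ∈ utComp F true) : ∃ c : F, c • e12 F = M :=
  Submodule.mem_span_singleton.1 (by simpa [utComp] using h)

lemma eq_add_of_mem_utComp_false (h : M ∈ utComp F false) :
    ∃ c d : F, c • e11 F + d • e22 F = M :=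
  Submodule.mem_span_pair.1 (by simpa [utComp] using h)

lemma mem_UTset_of_mem_utComp {g : Bool} (h : M ∈ utComp F g) : M ∈ UTset F := by
  cases g
  · obtain ⟨c, d, rfl⟩ := eq_add_of_mem_utComp_false h
    simp [mem_UTset, e11, e22, Matrix.single]
  · obtain ⟨c, rfl⟩ := eq_smul_e12_of_mem_utComp_true h
    simp [mem_UTset, e12, Matrix.single]

lemma entries_of_odd (x : ∀ i, utComp F (γ i)) {i : Fin n} (h : γ i = true) :
    (x i : M2 F) 0 0 = 0 ∧ (x i : M2 F) 1 1 = 0 := by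
  obtain ⟨c, hc⟩ := eq_smul_e12_of_mem_utComp_true (by simpa [h] using (x i).2)
  simp [← hc, e12, Matrix.single]

lemma entry_of_even (x : ∀ i, utComp F (γ i)) {i : Fin n} (h : γ i = false) :
    (x i : M2 F) 0 1 = 0 := by
  obtain ⟨c, d, hcd⟩ := eq_add_of_mem_utComp_false (by simpa [h] using (x i).2)
  simp [← hcd, e11, e22, Matrix.single]

end Graded

section Monomials

variable (γ) in
def mon (ε : Fin n → Bool) (x : ∀ i, utComp F (γ i)) : F :=
  ∏ i, if γ i then (x i : M2 F) 0 1 else if ε i then (x i : M2 F) 0 0 else (x i : M2 F) 1 1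

lemma mon_congr {ε ε' : Fin n → Bool} (h : ∀ i, γ i = false → ε i = ε' i) :
    mon (F := F) γ ε = mon γ ε' := by
  funext x
  refine Finset.prod_congr rfl fun i _ => ?_
  by_cases hi : γ i = false
  · simp [hi, h i hi]
  · simp [hi]

variable (F γ) in
def monE12 (ε : Fin n → Bool) (x : ∀ i, utComp F (γ i)) : M2 F := mon γ ε x • e12 F

variable (F γ) in
def prodE11 (x : ∀ i, utComp F (γ i)) : M2 F := (∏ i, (x i : M2 F) 0 0) • e11 F

variable (F γ) in
def prodE22 (x : ∀ i, utComp F (γ i)) : M2 F := (∏ i, (x i : M2 F) 1 1) • e22 F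

variable (σ : Equiv.Perm (Fin n)) (x : ∀ i, utComp F (γ i))

lemma cutProd_perm_eq_mon (hγ : ∀ i, γ i = false) {ε : Fin n → Bool} {c : ℕ}
    (hε : ∀ i, ε i = true ↔ (σ.symm i : ℕ) < c) :
    cutProd (fun i => (x (σ i) : M2 F)) c = mon γ ε x := by
  rw [mon, ← Equiv.prod_comp σ]
  refine Finset.prod_congr rfl fun i _ => ?_
  have := hε (σ i)
  simp only [Equiv.symm_apply_apply] at this
  by_cases hi : (i : ℕ) < c <;> simp [hγ, hi, this]

lemma pathProd_perm_eq_mon {ε : Fin n → Bool} {j : ℕ}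
    (hodd : ∀ i, γ i = true ↔ (σ.symm i : ℕ) = j)
    (hε : ∀ i, γ i = false → (ε i = true ↔ (σ.symm i : ℕ) < j)) :
    pathProd (fun i => (x (σ i) : M2 F)) j = mon γ ε x := by
  rw [mon, ← Equiv.prod_comp σ]
  refine Finset.prod_congr rfl fun i _ => ?_
  have h₁ := hodd (σ i)
  have h₂ := hε (σ i)
  simp only [Equiv.symm_apply_apply] at h₁ h₂
  by_cases hij : (i : ℕ) = j
  · simp [hij, h₁.2 hij]
  · have hev : γ (σ i) = false := by simpa [← h₁] using hij
    by_cases hi : (i : ℕ) < j <;> simp [hij, hi, hev, h₂ hev]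

end Monomials

section Generators

variable (σ : Equiv.Perm (Fin n)) {b : Fin (n + 1) → M2 F} (x : ∀ i, utComp F (γ i))

lemma interleavedProd_perm_eq (hb : ∀ j, b j ∈ UTset F) :
    interleavedProd b (fun i => (x (σ i) : M2 F)) =
      ((∏ j, b j 0 0) * ∏ i, (x i : M2 F) 0 0) • e11 F +
      (∑ j : Fin (n + 1), pathProd b j * cutProd (fun i => (x (σ i) : M2 F)) j +
        ∑ j : Fin n, cutProd b (j + 1) * pathProd (fun i => (x (σ i) : M2 F)) j) • e12 F +
      ((∏ j, b j 1 1) * ∏ i, (x i : M2 F) 1 1) • e22 F := by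
  have hy (i : Fin n) : (x (σ i) : M2 F) ∈ UTset F := mem_UTset_of_mem_utComp (x (σ i)).2
  rw [eq_of_mem_UTset (interleavedProd_mem_UTset hb hy), interleavedProd_zero_zero hb hy,
    interleavedProd_zero_one hb hy, interleavedProd_one_one hb hy,
    Equiv.prod_comp σ fun i => (x i : M2 F) 0 0, Equiv.prod_comp σ fun i => (x i : M2 F) 1 1]

variable {σ x}

lemma cutProd_perm_eq_zero_of_odd {t : Fin n} (ht : γ t = true) (c : ℕ) :
    cutProd (fun i => (x (σ i) : M2 F)) c = 0 :=
  -- stated at `σ (σ.symm t)`: `x (σ (σ.symm t))` cannot be rewritten to `x t` (dependent type)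
  have hx := entries_of_odd x (i := σ (σ.symm t)) (by simpa using ht)
  cutProd_eq_zero _ c (k := σ.symm t) hx.1 hx.2

lemma pathProd_perm_eq_zero_of_odd {t : Fin n} (ht : γ t = true) {j : ℕ}
    (hj : (σ.symm t : ℕ) ≠ j) : pathProd (fun i => (x (σ i) : M2 F)) j = 0 :=
  have hx := entries_of_odd x (i := σ (σ.symm t)) (by simpa using ht)
  pathProd_eq_zero_of_ne _ hj hx.1 hx.2

lemma interleavedProd_perm_eq_zero (hb : ∀ j, b j ∈ UTset F) {t₁ t₂ : Fin n} (hne : t₁ ≠ t₂)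
    (h₁ : γ t₁ = true) (h₂ : γ t₂ = true) : interleavedProd b (fun i => (x (σ i) : M2 F)) = 0 := by
  have hpath (j : Fin n) : pathProd (fun i => (x (σ i) : M2 F)) j = 0 := by
    by_cases hj : (σ.symm t₁ : ℕ) = j
    · refine pathProd_perm_eq_zero_of_odd h₂ fun h => hne ?_
      exact σ.symm.injective (Fin.ext (hj.trans h.symm))
    · exact pathProd_perm_eq_zero_of_odd h₁ hj
  rw [interleavedProd_perm_eq σ x hb,
    Finset.prod_eq_zero (Finset.mem_univ t₁) (entries_of_odd x h₁).1,
    Finset.prod_eq_zero (Finset.mem_univ t₁) (entries_of_odd x h₁).2]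
  simp [cutProd_perm_eq_zero_of_odd h₁, hpath]

lemma interleavedProd_perm_eq_of_odd_unique (hb : ∀ j, b j ∈ UTset F) {t : Fin n}
    (hγ : ∀ i, γ i = true ↔ i = t) :
    interleavedProd b (fun i => (x (σ i) : M2 F)) =
      cutProd b (σ.symm t + 1) • monE12 F γ (fun i => decide ((σ.symm i : ℕ) < σ.symm t)) x := by
  have ht : γ t = true := (hγ t).2 rfl
  have hpath : pathProd (fun i => (x (σ i) : M2 F)) (σ.symm t) =
      mon γ (fun i => decide ((σ.symm i : ℕ) < σ.symm t)) x := by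
    refine pathProd_perm_eq_mon σ x (fun i => ?_) (fun i _ => by simp)
    rw [hγ, Fin.val_inj, σ.symm.injective.eq_iff]
  rw [interleavedProd_perm_eq σ x hb,
    Finset.prod_eq_zero (Finset.mem_univ t) (entries_of_odd x ht).1,
    Finset.prod_eq_zero (Finset.mem_univ t) (entries_of_odd x ht).2,
    Finset.sum_eq_single (σ.symm t) (fun j _ hj => by
      rw [pathProd_perm_eq_zero_of_odd ht (Fin.val_injective.ne hj.symm), mul_zero]) (by simp)]
  simp [cutProd_perm_eq_zero_of_odd ht, hpath, monE12, smul_smul]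

lemma interleavedProd_perm_eq_of_even (hb : ∀ j, b j ∈ UTset F) (hγ : ∀ i, γ i = false) :
    interleavedProd b (fun i => (x (σ i) : M2 F)) =
      (∏ j, b j 0 0) • prodE11 F γ x + (∏ j, b j 1 1) • prodE22 F γ x +
        ∑ j : Fin (n + 1), pathProd b j • monE12 F γ (fun i => decide ((σ.symm i : ℕ) < j)) x := by
  have hcut (j : Fin (n + 1)) : cutProd (fun i => (x (σ i) : M2 F)) j =
      mon γ (fun i => decide ((σ.symm i : ℕ) < j)) x :=
    cutProd_perm_eq_mon σ x hγ fun i => by simp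
  have hpath (j : Fin n) : pathProd (fun i => (x (σ i) : M2 F)) j = 0 :=
    pathProd_eq_zero _ j (entry_of_even x (hγ _))
  rw [interleavedProd_perm_eq σ x hb]
  simp only [hcut, hpath, mul_zero, Finset.sum_const_zero, add_zero, Finset.sum_smul, prodE11,
    prodE22, monE12, smul_smul]
  abel

end Generators

section Sorting

lemma exists_perm_symm_lt_of_lt {α : Type*} [LinearOrder α] (κ : Fin n → α) :
    ∃ σ : Equiv.Perm (Fin n), ∀ i j, κ i < κ j → σ.symm i < σ.symm j :=
  ⟨Tuple.sort κ, fun i j h => (Tuple.monotone_sort κ).reflect_lt (by simpa using h)⟩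

lemma exists_perm_pivot (t : Fin n) (p : Fin n → Prop) [DecidablePred p] :
    ∃ σ : Equiv.Perm (Fin n), ∀ i ≠ t, p i ↔ σ.symm i < σ.symm t := by
  obtain ⟨σ, hσ⟩ := exists_perm_symm_lt_of_lt fun i => if i = t then 1 else if p i then 0 else 2
  refine ⟨σ, fun i hi => ⟨fun hp => hσ i t (by simp [hi, hp]), fun hlt => ?_⟩⟩
  by_contra hp
  exact (hσ t i (by simp [hi, hp])).not_gt hlt

lemma exists_perm_cut (p : Fin n → Prop) [DecidablePred p] :
    ∃ σ : Equiv.Perm (Fin n), ∃ c : Fin (n + 1), ∀ i, p i ↔ (σ.symm i : ℕ) < c := by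
  obtain ⟨σ, hσ⟩ := exists_perm_symm_lt_of_lt fun i => if p i then 0 else 1
  by_cases h : ∃ i, ¬ p i
  · obtain ⟨i₀, hi₀, hmin⟩ := Finset.exists_min_image (Finset.univ.filter fun i => ¬ p i)
      (fun i => σ.symm i) (by simpa [Finset.Nonempty] using h)
    have hi₀' : ¬ p i₀ := by simpa using hi₀
    refine ⟨σ, (σ.symm i₀).castSucc, fun i => ⟨fun hp => ?_, fun hlt => ?_⟩⟩
    · simpa using hσ i i₀ (by simp [hp, hi₀'])
    · by_contra hp
      exact (hmin i (by simpa using hp)).not_gt (by simpa using hlt)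
  · simp only [not_exists, not_not] at h
    exact ⟨σ, Fin.last n, fun i => by simp [h i]⟩

end Sorting

section Span

variable (γ) in
lemma Vspan_le {W : Submodule F ((∀ i, utComp F (γ i)) → M2 F)}
    (h : ∀ (σ : Equiv.Perm (Fin n)) (b : Fin (n + 1) → M2 F), (∀ j, b j ∈ UTset F) →
      (fun x => interleavedProd b fun i => (x (σ i) : M2 F)) ∈ W) :
    Vspan F (UTset F) γ ≤ W :=
  Submodule.span_le.2 fun _ ⟨σ, b, hb, hf⟩ => hf ▸ h σ b hb

lemma interleavedProd_mem_Vspan (σ : Equiv.Perm (Fin n)) {b : Fin (n + 1) → M2 F}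
    (hb : ∀ j, b j ∈ UTset F) :
    (fun x : ∀ i, utComp F (γ i) => interleavedProd b fun i => (x (σ i) : M2 F)) ∈
      Vspan F (UTset F) γ :=
  Submodule.subset_span ⟨σ, b, hb, rfl⟩

lemma prodE11_mem_Vspan (hγ : ∀ i, γ i = false) : prodE11 F γ ∈ Vspan F (UTset F) γ := by
  convert interleavedProd_mem_Vspan 1 (b := fun _ => e11 F) (by simp [mem_UTset, e11]) using 1
  funext x
  rw [interleavedProd_perm_eq_of_even (by simp [mem_UTset, e11]) hγ]
  simp [e11, pathProd_eq_zero]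

lemma prodE22_mem_Vspan (hγ : ∀ i, γ i = false) : prodE22 F γ ∈ Vspan F (UTset F) γ := by
  convert interleavedProd_mem_Vspan 1 (b := fun _ => e22 F) (by simp [mem_UTset, e22]) using 1
  funext x
  rw [interleavedProd_perm_eq_of_even (by simp [mem_UTset, e22]) hγ]
  simp [e22, pathProd_eq_zero]

/-- Sorting the variables so that those with `ε i` come first, the generator with a single
`e₁₂` at the cut between the two blocks and identities elsewhere is `monE12 F γ ε`. -/
lemma monE12_mem_Vspan_of_even (hγ : ∀ i, γ i = false) (ε : Fin n → Bool) :
    monE12 F γ ε ∈ Vspan F (UTset F) γ := by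
  obtain ⟨σ, c, hc⟩ := exists_perm_cut fun i => ε i = true
  set b : Fin (n + 1) → M2 F := fun j => if j = c then e12 F else 1
  have hb (j : Fin (n + 1)) : b j ∈ UTset F := by
    by_cases hj : j = c <;> simp [b, hj, mem_UTset, e12]
  have hpath (j : Fin (n + 1)) : pathProd b j = if j = c then 1 else 0 := by
    by_cases hj : j = c
    · subst hj
      refine (Finset.prod_eq_one fun i _ => ?_).trans (if_pos rfl).symm
      by_cases hi : i = j <;> simp [b, hi, Fin.val_eq_val, e12]
    · rw [if_neg hj]
      exact pathProd_eq_zero b j (by simp [b, hj])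
  convert interleavedProd_mem_Vspan σ hb using 1
  funext x
  rw [interleavedProd_perm_eq_of_even hb hγ,
    Finset.prod_eq_zero (Finset.mem_univ c) (by simp [b, e12]),
    Finset.prod_eq_zero (Finset.mem_univ c) (by simp [b, e12])]
  simp [hpath, ← hc]

lemma monE12_mem_Vspan_of_odd_unique {t : Fin n} (hγ : ∀ i, γ i = true ↔ i = t)
    (ε : Fin n → Bool) : monE12 F γ ε ∈ Vspan F (UTset F) γ := by
  obtain ⟨σ, hσ⟩ := exists_perm_pivot t fun i => ε i = true
  have hb (j : Fin (n + 1)) : (1 : M2 F) ∈ UTset F := by simp [mem_UTset]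
  have hmon : mon (F := F) γ (fun i => decide ((σ.symm i : ℕ) < σ.symm t)) = mon γ ε :=
    mon_congr fun i hi => by
      have hit : i ≠ t := fun h => by simp [(hγ i).2 h] at hi
      exact Bool.eq_iff_iff.2 (by simpa using (hσ i hit).symm)
  convert interleavedProd_mem_Vspan σ hb using 1
  funext x
  rw [interleavedProd_perm_eq_of_odd_unique hb hγ, monE12, monE12, hmon]
  simp [cutProd]

end Span

section Dimension

variable (F γ) in
def testPoint (ε : Fin n → Bool) : ∀ i, utComp F (γ i) := fun i =>
  ⟨if γ i then e12 F else if ε i then e11 F else e22 F, by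
    cases γ i
    · exact Submodule.subset_span (by by_cases h : ε i <;> simp [h])
    · exact Submodule.mem_span_singleton_self _⟩

lemma mon_testPoint (ε ε' : Fin n → Bool) :
    mon γ ε (testPoint F γ ε') = if ∀ i, γ i = false → ε i = ε' i then 1 else 0 := by
  convert Fintype.prod_boole (M₀ := F) (p := fun i => γ i = false → ε i = ε' i) using 1
  · refine Finset.prod_congr rfl fun i _ => ?_
    dsimp only [testPoint]
    by_cases hγ : γ i <;> by_cases hε : ε i <;> by_cases hε' : ε' i <;>
      simp [hγ, hε, hε', e11, e12, e22]
  · congr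

variable (γ) in
/-- Monomials are indexed by a choice of diagonal entry for each even variable. -/
def extendEven (δ : {i // γ i = false} → Bool) (i : Fin n) : Bool :=
  if h : γ i = false then δ ⟨i, h⟩ else false

lemma mon_extendEven_testPoint (δ δ' : {i // γ i = false} → Bool) :
    mon γ (extendEven γ δ) (testPoint F γ (extendEven γ δ')) = if δ = δ' then 1 else 0 := by
  simp +contextual [mon_testPoint, extendEven, funext_iff, Subtype.forall]

variable (F) in
def evalEntry {X : Type*} (p : X) (r s : Fin 2) : Module.Dual F (X → M2 F) :=
  Matrix.entryLinearMap F F r s ∘ₗ LinearMap.proj p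

@[simp] lemma evalEntry_apply {X : Type*} (p : X) (r s : Fin 2) (f : X → M2 F) :
    evalEntry F p r s f = f p r s := rfl

lemma monE12_mem_span_extendEven (ε : Fin n → Bool) :
    monE12 F γ ε ∈ Submodule.span F (Set.range fun δ => monE12 F γ (extendEven γ δ)) := by
  have h : mon (F := F) γ ε = mon γ (extendEven γ fun i => ε i) :=
    mon_congr fun i hi => by simp [extendEven, hi]
  exact Submodule.subset_span ⟨fun i => ε i, funext fun x => by simp [monE12, h]⟩

lemma linearIndependent_monE12_extendEven :
    LinearIndependent F fun δ : {i // γ i = false} → Bool => monE12 F γ (extendEven γ δ) :=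
  .of_pairwise_dual_eq_zero_one _ (fun δ' => evalEntry F (testPoint F γ (extendEven γ δ')) 0 1)
    (fun δ' δ h => by simp [monE12, mon_extendEven_testPoint, Ne.symm h])
    (fun δ => by simp [monE12, mon_extendEven_testPoint, e12])

lemma Vspan_eq_span_of_odd_unique {t : Fin n} (hγ : ∀ i, γ i = true ↔ i = t) :
    Vspan F (UTset F) γ = Submodule.span F (Set.range fun δ => monE12 F γ (extendEven γ δ)) := by
  refine le_antisymm (Vspan_le γ fun σ b hb => ?_) ?_
  · rw [funext fun x => interleavedProd_perm_eq_of_odd_unique (σ := σ) (x := x) hb hγ]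
    exact Submodule.smul_mem _ _ (monE12_mem_span_extendEven _)
  · exact Submodule.span_le.2 (Set.range_subset_iff.2 fun δ => monE12_mem_Vspan_of_odd_unique hγ _)

lemma finrank_Vspan_of_odd_unique {t : Fin n} (hγ : ∀ i, γ i = true ↔ i = t) :
    Module.finrank F (Vspan F (UTset F) γ) = 2 ^ (n - 1) := by
  rw [Vspan_eq_span_of_odd_unique hγ, finrank_span_eq_card linearIndependent_monE12_extendEven,
    Fintype.card_fun, Fintype.card_bool]
  simp [← Bool.not_eq_true, hγ, Fintype.card_subtype_compl]

end Dimension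

section AllEven

variable (F γ) in
def evenFamily : (({i // γ i = false} → Bool) ⊕ Bool) → (∀ i, utComp F (γ i)) → M2 F :=
  Sum.elim (fun δ => monE12 F γ (extendEven γ δ)) fun s => cond s (prodE11 F γ) (prodE22 F γ)

lemma linearIndependent_evenFamily (hγ : ∀ i, γ i = false) :
    LinearIndependent F (evenFamily F γ) := by
  let φ : (({i // γ i = false} → Bool) ⊕ Bool) → Module.Dual F ((∀ i, utComp F (γ i)) → M2 F) :=
    Sum.elim (fun δ => evalEntry F (testPoint F γ (extendEven γ δ)) 0 1) fun s =>
      cond s (evalEntry F (testPoint F γ fun _ => true) 0 0)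
        (evalEntry F (testPoint F γ fun _ => false) 1 1)
  refine .of_pairwise_dual_eq_zero_one _ φ ?_ ?_
  · rintro (δ' | (_ | _)) (δ | (_ | _)) h <;>
      simp [φ, evenFamily, monE12, prodE11, prodE22, mon_extendEven_testPoint, e11, e12, e22] at h ⊢
    exact Ne.symm h
  · rintro (δ | (_ | _)) <;>
      simp [φ, evenFamily, monE12, prodE11, prodE22, mon_extendEven_testPoint, testPoint, hγ,
        e11, e12, e22]

lemma Vspan_eq_span_evenFamily (hγ : ∀ i, γ i = false) :
    Vspan F (UTset F) γ = Submodule.span F (Set.range (evenFamily F γ)) := by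
  have mem (i) : evenFamily F γ i ∈ Submodule.span F (Set.range (evenFamily F γ)) :=
    Submodule.subset_span ⟨i, rfl⟩
  refine le_antisymm (Vspan_le γ fun σ b hb => ?_) ?_
  · have hgen : (fun x => interleavedProd b fun i => (x (σ i) : M2 F)) =
        (∏ j, b j 0 0) • prodE11 F γ + (∏ j, b j 1 1) • prodE22 F γ +
          ∑ j : Fin (n + 1), pathProd b j • monE12 F γ fun i => decide ((σ.symm i : ℕ) < j) := by
      funext x
      simp [interleavedProd_perm_eq_of_even hb hγ]
    rw [hgen]
    refine add_mem (add_mem (Submodule.smul_mem _ _ (mem (.inr true)))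
      (Submodule.smul_mem _ _ (mem (.inr false)))) (sum_mem fun j _ => Submodule.smul_mem _ _ ?_)
    refine Submodule.span_mono ?_ (monE12_mem_span_extendEven _)
    exact Set.range_subset_iff.2 fun δ => ⟨.inl δ, rfl⟩
  · refine Submodule.span_le.2 (Set.range_subset_iff.2 ?_)
    rintro (δ | (_ | _))
    exacts [monE12_mem_Vspan_of_even hγ _, prodE22_mem_Vspan hγ, prodE11_mem_Vspan hγ]

lemma finrank_Vspan_of_even (hγ : ∀ i, γ i = false) :
    Module.finrank F (Vspan F (UTset F) γ) = 2 ^ n + 2 := by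
  rw [Vspan_eq_span_evenFamily hγ, finrank_span_eq_card (linearIndependent_evenFamily hγ)]
  simp [hγ]

end AllEven

lemma Vspan_eq_bot {t₁ t₂ : Fin n} (hne : t₁ ≠ t₂) (h₁ : γ t₁ = true) (h₂ : γ t₂ = true) :
    Vspan F (UTset F) γ = ⊥ :=
  eq_bot_iff.2 <| Vspan_le γ fun σ b hb => by
    rw [funext fun x => interleavedProd_perm_eq_zero (σ := σ) (x := x) hb hne h₁ h₂]
    exact zero_mem _

lemma finrank_Vspan_eq (γ : Fin n → Bool) :
    Module.finrank F (Vspan F (UTset F) γ) =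
      (if γ = (fun _ => false) then 2 ^ n + 2 else 0) +
        ∑ t, if γ = (fun i => decide (i = t)) then 2 ^ (n - 1) else 0 := by
  have hodd (t t' : Fin n) : (fun i => decide (i = t)) = (fun i => decide (i = t')) ↔ t = t' :=
    ⟨fun h => by simpa using congrFun h t, fun h => h ▸ rfl⟩
  by_cases h₀ : γ = fun _ => false
  · subst h₀
    have (t : Fin n) : (fun _ : Fin n => false) ≠ fun i => decide (i = t) :=
      fun h => by simpa using congrFun h t
    simp [finrank_Vspan_of_even (fun _ => rfl), this]
  by_cases h₁ : ∃ t, γ = fun i => decide (i = t)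
  · obtain ⟨t, rfl⟩ := h₁
    simp [finrank_Vspan_of_odd_unique (t := t) fun i => decide_eq_true_iff, h₀, hodd]
  obtain ⟨t, ht⟩ : ∃ t, γ t = true := by
    by_contra! h
    exact h₀ (funext fun i => by simpa using h i)
  obtain ⟨s, hs⟩ : ∃ s, γ s ≠ decide (s = t) := by
    by_contra! h
    exact h₁ ⟨t, funext h⟩
  have hst : s ≠ t := fun h => by simp [h, ht] at hs
  rw [Vspan_eq_bot hst (by simpa [hst] using hs) ht, finrank_bot, if_neg h₀,
    Finset.sum_eq_zero fun t' _ => if_neg fun h => h₁ ⟨t', h⟩, add_zero]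

end UT2

theorem stmt11_general (F : Type*) [Field F] (n : ℕ) (hn : 1 ≤ n) :
    (∑ γ : Fin n → Bool, Module.finrank F ↥(Vspan F (UTset F) γ))
      = 2 ^ (n - 1) * (n + 2) + 2 := by
  calc (∑ γ : Fin n → Bool, Module.finrank F ↥(Vspan F (UTset F) γ))
      = 2 ^ n + 2 + n * 2 ^ (n - 1) := by
        simp_rw [UT2.finrank_Vspan_eq]
        rw [Finset.sum_add_distrib, Finset.sum_comm]
        simp
    _ = 2 ^ (n - 1) * (n + 2) + 2 := by
        obtain ⟨m, rfl⟩ := Nat.exists_eq_add_of_le' hn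
        rw [add_tsub_cancel_right, pow_succ]
        ring

/-- For every `n ≥ 1`, the `n`-th generalized graded codimension of `UT₂`
with its canonical `ℤ₂`-grading, under the action of `B = UT₂` itself by left and right
multiplication, is `c_n^{UT₂} = 2^{n-1}(n+2) + 2`. -/
theorem stmt11 (F : Type*) [Field F] [CharZero F] (n : ℕ) (hn : 1 ≤ n) :
    (∑ γ : Fin n → Bool, Module.finrank F ↥(Vspan F (UTset F) γ))
      = 2 ^ (n - 1) * (n + 2) + 2 :=
  stmt11_general F n hn
end
end

section
/- Let F be a field of characteristic zero. For every n ≥ 1, the F-span of the set of all functions from D to UT₂ of the form y ↦ b₀·y·b₁·y·b₂·⋯·y·bₙ (the variable y occurring exactly n times), where b₀, b₁, …, bₙ range over UT₂, has dimension exactly n + 3. (This is the multiplicity of the irreducible character indexed by λ = (n), μ = ∅ in the generalized graded cocharacter of UT₂ under the action of UT₂ itself.) -/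
noncomputable section

/-- `D = F e₁₁ ⊕ F e₂₂`, the even component of the canonical `ℤ₂`-grading of `UT₂`. -/
def Dsub (F : Type*) [Field F] : Submodule F (M2 F) := Submodule.span F {e11 F, e22 F}

/-- `F e₁₂`, the odd component of the canonical `ℤ₂`-grading of `UT₂`. -/
def oddSub (F : Type*) [Field F] : Submodule F (M2 F) := Submodule.span F {e12 F}

/-!
For `y = diag(s, t) ∈ D` and upper triangular `b₀, …, bₙ`, the product `b₀ y b₁ ⋯ y bₙ` is
upper triangular with diagonal entries in `F sⁿ` and `F tⁿ` and with `(1,2)` entry a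
homogeneous polynomial of degree `n` in `s, t`. Conversely, right multiplication by `y e₁₁`,
`y e₁₂`, `y e₂₂` reaches every one of the `n + 3` functions `sⁿ e₁₁`, `tⁿ e₂₂`,
`sᵏ tⁿ⁻ᵏ e₁₂` from those of degree `n - 1`, so by induction on `n` they span. They are
linearly independent because `F` is infinite (restrict to `y = diag(t, 1)`).
-/

namespace UT2

variable {F : Type*} [Field F]

lemma off_diag_eq_zero_of_mem_Dsub {y : M2 F} (hy : y ∈ Dsub F) :
    y 1 0 = 0 ∧ y 0 1 = 0 := by
  obtain ⟨a, b, rfl⟩ := Submodule.mem_span_pair.mp hy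
  simp [e11, e22, Matrix.single]

lemma eq_smul_e11_add_smul_e12_add_smul_e22 {b : M2 F} (hb : b ∈ UTset F) :
    b = b 0 0 • e11 F + b 0 1 • e12 F + b 1 1 • e22 F := by
  have hb : b 1 0 = 0 := hb
  ext i j
  fin_cases i <;> fin_cases j <;> simp [e11, e12, e22, Matrix.single, hb]

lemma e11_mem_UTset : e11 F ∈ UTset F := by simp [UTset, e11, Matrix.single]

lemma e12_mem_UTset : e12 F ∈ UTset F := by simp [UTset, e12, Matrix.single]

lemma e22_mem_UTset : e22 F ∈ UTset F := by simp [UTset, e22, Matrix.single]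

lemma e11_mul_mul {y : M2 F} (hy : y ∈ Dsub F) (c : M2 F) :
    e11 F * (y * c) = (y 0 0 * c 0 0) • e11 F + (y 0 0 * c 0 1) • e12 F := by
  obtain ⟨-, h01⟩ := off_diag_eq_zero_of_mem_Dsub hy
  ext i j
  fin_cases i <;> fin_cases j <;>
    simp [e11, e12, Matrix.mul_apply, Fin.sum_univ_two, Matrix.single, h01]

lemma e12_mul_mul {y c : M2 F} (hy : y ∈ Dsub F) (hc : c ∈ UTset F) :
    e12 F * (y * c) = (y 1 1 * c 1 1) • e12 F := by
  obtain ⟨h10, -⟩ := off_diag_eq_zero_of_mem_Dsub hy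
  have hc : c 1 0 = 0 := hc
  ext i j
  fin_cases i <;> fin_cases j <;>
    simp [e12, Matrix.mul_apply, Fin.sum_univ_two, Matrix.single, h10, hc]

lemma e22_mul_mul {y c : M2 F} (hy : y ∈ Dsub F) (hc : c ∈ UTset F) :
    e22 F * (y * c) = (y 1 1 * c 1 1) • e22 F := by
  obtain ⟨h10, -⟩ := off_diag_eq_zero_of_mem_Dsub hy
  have hc : c 1 0 = 0 := hc
  ext i j
  fin_cases i <;> fin_cases j <;>
    simp [e22, Matrix.mul_apply, Fin.sum_univ_two, Matrix.single, h10, hc]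

section Monoid

variable {M : Type*} [Monoid M]

def word {m : ℕ} (b : Fin (m + 1) → M) (y : M) : M :=
  b 0 * (List.ofFn fun i : Fin m => y * b i.succ).prod

lemma word_snoc {m : ℕ} (b : Fin (m + 1) → M) (c y : M) :
    word (Fin.snoc b c : Fin (m + 2) → M) y = word b y * (y * c) := by
  rw [word, List.ofFn_succ']
  simp only [Fin.succ_castSucc, Fin.snoc_castSucc, Fin.succ_last, Fin.snoc_last]
  simp [word, mul_assoc]

end Monoid

variable (F) in
def wordFuns (m : ℕ) : Set (↥(Dsub F) → M2 F) :=
  {f | ∃ b : Fin (m + 1) → M2 F, (∀ i, b i ∈ UTset F) ∧ f = fun y : ↥(Dsub F) => word b y}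

def monomialFun (m : ℕ) : Fin (m + 1) ⊕ Fin 2 → (↥(Dsub F) → M2 F) :=
  Sum.elim (fun k y => ((y : M2 F) 0 0 ^ (k : ℕ) * (y : M2 F) 1 1 ^ (m - k)) • e12 F)
    ![fun y => (y : M2 F) 0 0 ^ m • e11 F, fun y => (y : M2 F) 1 1 ^ m • e22 F]

def mulRightVar (c : M2 F) : (↥(Dsub F) → M2 F) →ₗ[F] (↥(Dsub F) → M2 F) where
  toFun f y := f y * ((y : M2 F) * c)
  map_add' f g := by funext y; simp [add_mul]
  map_smul' a f := by funext y; simp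

lemma mulRightVar_apply (c : M2 F) (f : ↥(Dsub F) → M2 F) (y : ↥(Dsub F)) :
    mulRightVar c f y = f y * ((y : M2 F) * c) := rfl

lemma mulRightVar_monomialFun_inl {c : M2 F} (hc : c ∈ UTset F) (m : ℕ) (k : Fin (m + 1)) :
    mulRightVar c (monomialFun m (Sum.inl k))
      = c 1 1 • monomialFun (m + 1) (Sum.inl k.castSucc) := by
  funext y
  have hk : m + 1 - k = m - k + 1 := by omega
  simp only [mulRightVar_apply, monomialFun, Sum.elim_inl, Pi.smul_apply, smul_mul_assoc,
    e12_mul_mul y.2 hc, Fin.val_castSucc, hk, pow_succ, smul_smul]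
  ring_nf

lemma mulRightVar_monomialFun_inr_zero (c : M2 F) (m : ℕ) :
    mulRightVar c (monomialFun m (Sum.inr 0))
      = c 0 0 • monomialFun (m + 1) (Sum.inr 0)
        + c 0 1 • monomialFun (m + 1) (Sum.inl (Fin.last _)) := by
  funext y
  simp only [mulRightVar_apply, monomialFun, Sum.elim_inr, Sum.elim_inl, Matrix.cons_val_zero,
    Pi.add_apply, Pi.smul_apply, smul_mul_assoc, e11_mul_mul y.2, Fin.val_last, Nat.sub_self,
    pow_zero, mul_one, pow_succ, smul_add, smul_smul]
  ring_nf

lemma mulRightVar_monomialFun_inr_one {c : M2 F} (hc : c ∈ UTset F) (m : ℕ) :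
    mulRightVar c (monomialFun m (Sum.inr 1)) = c 1 1 • monomialFun (m + 1) (Sum.inr 1) := by
  funext y
  simp only [mulRightVar_apply, monomialFun, Sum.elim_inr, Matrix.cons_val_one,
    Matrix.cons_val_zero, Pi.smul_apply, smul_mul_assoc, e22_mul_mul y.2 hc, pow_succ, smul_smul]
  ring_nf

lemma mulRightVar_mem_wordFuns {c : M2 F} (hc : c ∈ UTset F) {m : ℕ} {f : ↥(Dsub F) → M2 F}
    (hf : f ∈ wordFuns F m) : mulRightVar c f ∈ wordFuns F (m + 1) := by
  obtain ⟨b, hb, rfl⟩ := hf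
  refine ⟨Fin.snoc b c,
    fun i => Fin.lastCases (by simpa using hc) (fun j => by simpa using hb j) i, ?_⟩
  funext y
  rw [mulRightVar_apply, word_snoc]

lemma exists_mulRightVar_eq_of_mem_wordFuns {m : ℕ} {f : ↥(Dsub F) → M2 F}
    (hf : f ∈ wordFuns F (m + 1)) : ∃ c ∈ UTset F, ∃ g ∈ wordFuns F m, f = mulRightVar c g := by
  obtain ⟨b, hb, rfl⟩ := hf
  refine ⟨b (Fin.last _), hb _, fun y => word (Fin.init b) y, ⟨Fin.init b, fun i => hb _, rfl⟩, ?_⟩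
  funext y
  rw [mulRightVar_apply, ← word_snoc, Fin.snoc_init_self]

lemma exists_mulRightVar_eq_monomialFun (m : ℕ) (j : Fin (m + 2) ⊕ Fin 2) :
    ∃ c ∈ UTset F, ∃ j', monomialFun (m + 1) j = mulRightVar c (monomialFun m j') := by
  rcases j with k | i
  · induction k using Fin.lastCases with
    | last => exact ⟨e12 F, e12_mem_UTset, Sum.inr 0,
        by simp [mulRightVar_monomialFun_inr_zero, e12, Matrix.single]⟩
    | cast k => exact ⟨e22 F, e22_mem_UTset, Sum.inl k,
        by rw [mulRightVar_monomialFun_inl e22_mem_UTset]; simp [e22, Matrix.single]⟩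
  · fin_cases i
    · exact ⟨e11 F, e11_mem_UTset, Sum.inr 0,
        by simp [mulRightVar_monomialFun_inr_zero, e11, Matrix.single]⟩
    · exact ⟨e22 F, e22_mem_UTset, Sum.inr 1,
        by rw [mulRightVar_monomialFun_inr_one e22_mem_UTset]; simp [e22, Matrix.single]⟩

open Submodule

lemma span_wordFuns_le_comap_mulRightVar {c : M2 F} (hc : c ∈ UTset F) (m : ℕ) :
    span F (wordFuns F m) ≤ (span F (wordFuns F (m + 1))).comap (mulRightVar c) :=
  span_le.mpr fun _ hf => subset_span (mulRightVar_mem_wordFuns hc hf)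

lemma span_range_monomialFun_le_comap_mulRightVar {c : M2 F} (hc : c ∈ UTset F) (m : ℕ) :
    span F (Set.range (monomialFun m))
      ≤ (span F (Set.range (monomialFun (m + 1)))).comap (mulRightVar c) := by
  rw [span_le]
  rintro _ ⟨k | i, rfl⟩
  · rw [SetLike.mem_coe, mem_comap, mulRightVar_monomialFun_inl hc]
    exact smul_mem _ _ (subset_span ⟨_, rfl⟩)
  · fin_cases i
    · show mulRightVar c (monomialFun m (Sum.inr 0)) ∈ span F (Set.range (monomialFun (m + 1)))
      rw [mulRightVar_monomialFun_inr_zero]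
      exact add_mem (smul_mem _ _ (subset_span ⟨_, rfl⟩)) (smul_mem _ _ (subset_span ⟨_, rfl⟩))
    · show mulRightVar c (monomialFun m (Sum.inr 1)) ∈ span F (Set.range (monomialFun (m + 1)))
      rw [mulRightVar_monomialFun_inr_one hc]
      exact smul_mem _ _ (subset_span ⟨_, rfl⟩)

lemma span_wordFuns_zero : span F (wordFuns F 0) = span F (Set.range (monomialFun 0)) := by
  apply le_antisymm <;> rw [span_le]
  · rintro _ ⟨b, hb, rfl⟩
    have hword : (fun y : ↥(Dsub F) => word b y) = b 0 0 0 • monomialFun 0 (Sum.inr 0)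
        + b 0 0 1 • monomialFun 0 (Sum.inl 0) + b 0 1 1 • monomialFun 0 (Sum.inr 1) := by
      funext y
      simpa [word, monomialFun] using eq_smul_e11_add_smul_e12_add_smul_e22 (hb 0)
    rw [hword]
    exact add_mem (add_mem (smul_mem _ _ (subset_span ⟨_, rfl⟩))
      (smul_mem _ _ (subset_span ⟨_, rfl⟩))) (smul_mem _ _ (subset_span ⟨_, rfl⟩))
  · rintro _ ⟨j, rfl⟩
    obtain ⟨v, hv, hj⟩ : ∃ v ∈ UTset F, monomialFun 0 j = fun _ => v := by
      rcases j with k | i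
      · exact ⟨e12 F, e12_mem_UTset, by simp [monomialFun, Fin.fin_one_eq_zero k]⟩
      · fin_cases i
        · exact ⟨e11 F, e11_mem_UTset, by simp [monomialFun]⟩
        · exact ⟨e22 F, e22_mem_UTset, by simp [monomialFun]⟩
    exact subset_span ⟨fun _ => v, fun _ => hv, by simp [hj, word]⟩

lemma span_wordFuns_eq_span_range_monomialFun (m : ℕ) :
    span F (wordFuns F m) = span F (Set.range (monomialFun m)) := by
  induction m with
  | zero => exact span_wordFuns_zero
  | succ m ih =>
    apply le_antisymm <;> rw [span_le]
    · intro f hf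
      obtain ⟨c, hc, g, hg, rfl⟩ := exists_mulRightVar_eq_of_mem_wordFuns hf
      exact span_range_monomialFun_le_comap_mulRightVar hc m (ih ▸ subset_span hg)
    · rintro _ ⟨j, rfl⟩
      obtain ⟨c, hc, j', hj⟩ := exists_mulRightVar_eq_monomialFun (F := F) m j
      rw [SetLike.mem_coe, hj]
      exact span_wordFuns_le_comap_mulRightVar hc m (ih ▸ subset_span ⟨j', rfl⟩)

open Polynomial in
lemma eq_zero_of_forall_sum_mul_pow_eq_zero {R : Type*} [CommRing R] [IsDomain R] [Infinite R]
    {m : ℕ} (a : Fin m → R) (h : ∀ t : R, ∑ k, a k * t ^ (k : ℕ) = 0) : a = 0 := by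
  set p : R[X] := ∑ k, C (a k) * X ^ (k : ℕ)
  have hp : p = 0 := Polynomial.funext fun t => by simpa [p, eval_finsetSum] using h t
  funext k
  simpa [p, finsetSum_coeff, coeff_C_mul, coeff_X_pow, Fin.val_eq_val] using
    congrArg (coeff · k) hp

variable (F) in
def diagPoint (t : F) : ↥(Dsub F) :=
  ⟨t • e11 F + e22 F, add_mem (smul_mem _ _ (subset_span (by simp))) (subset_span (by simp))⟩

@[simp]
lemma diagPoint_apply_zero_zero (t : F) : (diagPoint F t : M2 F) 0 0 = t := by
  simp [diagPoint, e11, e22, Matrix.single]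

@[simp]
lemma diagPoint_apply_one_one (t : F) : (diagPoint F t : M2 F) 1 1 = 1 := by
  simp [diagPoint, e11, e22, Matrix.single]

lemma sum_smul_monomialFun_diagPoint (m : ℕ) (g : Fin (m + 1) ⊕ Fin 2 → F) (t : F) :
    (∑ j, g j • monomialFun m j) (diagPoint F t)
      = (g (Sum.inr 0) * t ^ m) • e11 F + (∑ k, g (Sum.inl k) * t ^ (k : ℕ)) • e12 F
        + g (Sum.inr 1) • e22 F := by
  simp [Fintype.sum_sum_type, monomialFun, Finset.sum_smul, smul_smul]
  abel

lemma linearIndependent_monomialFun [Infinite F] (m : ℕ) :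
    LinearIndependent F (monomialFun (F := F) m) := by
  rw [Fintype.linearIndependent_iff]
  intro g hg
  have hzero (t : F) := (sum_smul_monomialFun_diagPoint m g t).symm.trans (congrFun hg _)
  have h00 : g (Sum.inr 0) = 0 := by
    simpa [e11, e12, e22] using congrFun (congrFun (hzero 1) 0) 0
  have h11 : g (Sum.inr 1) = 0 := by
    simpa [e11, e12, e22] using congrFun (congrFun (hzero 1) 1) 1
  have h01 : (fun k => g (Sum.inl k)) = 0 :=
    eq_zero_of_forall_sum_mul_pow_eq_zero _ fun t => by
      simpa [e11, e12, e22] using congrFun (congrFun (hzero t) 0) 1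
  rintro (k | i)
  · exact congrFun h01 k
  · fin_cases i
    · exact h00
    · exact h11

end UT2

theorem stmt16_general (F : Type*) [Field F] [CharZero F] (n : ℕ) :
    Module.finrank F ↥(Submodule.span F
      {f : ↥(Dsub F) → M2 F | ∃ b : Fin (n + 1) → M2 F,
        (∀ i, b i ∈ UTset F) ∧
        f = fun y : ↥(Dsub F) =>
          b 0 * (List.ofFn fun i : Fin n => ((y : M2 F)) * b i.succ).prod})
      = n + 3 := by
  change Module.finrank F (Submodule.span F (UT2.wordFuns F n)) = n + 3
  rw [UT2.span_wordFuns_eq_span_range_monomialFun,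
    finrank_span_eq_card (UT2.linearIndependent_monomialFun n)]
  simp

/-- For every `n ≥ 1`, the `F`-span of the functions `D → UT₂` of the
form `y ↦ b₀ y b₁ y b₂ ⋯ y bₙ` (with `y` occurring `n` times), where `b₀, …, bₙ` range
over `UT₂`, has dimension exactly `n + 3`. -/
theorem stmt16 (F : Type*) [Field F] [CharZero F] (n : ℕ) (hn : 1 ≤ n) :
    Module.finrank F ↥(Submodule.span F
      {f : ↥(Dsub F) → M2 F | ∃ b : Fin (n + 1) → M2 F,
        (∀ i, b i ∈ UTset F) ∧
        f = fun y : ↥(Dsub F) =>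
          b 0 * (List.ofFn fun i : Fin n => ((y : M2 F)) * b i.succ).prod})
      = n + 3 :=
  stmt16_general F n
end
end

section
/- Let F be a field of characteristic zero. For every n ≥ 1, the n functions from D × (F·e₁₂) to UT₂ given by (y, z) ↦ y^i·z·y^{n−1−i} for i = 0, 1, …, n−1 are linearly independent over F. -/
noncomputable section

/-!
Evaluate the relation at `y = diag(a, 1)`, `z = e₁₂` and read off the `(1, 2)` entry: the `i`-th
function becomes `a ↦ aⁱ`. These monomial functions are independent over any infinite field, since
a polynomial vanishing on all of `F` is zero.
-/

open Polynomial

theorem linearIndependent_fun_pow (K : Type*) [Field K] [Infinite K] (n : ℕ) :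
    LinearIndependent K (fun (i : Fin n) (a : K) => a ^ (i : ℕ)) := by
  let evalFun : K[X] →ₗ[K] K → K := LinearMap.pi leval
  have hinj : LinearMap.ker evalFun = ⊥ :=
    LinearMap.ker_eq_bot.2 fun p q h => Polynomial.funext (congrFun h)
  have hX : LinearIndependent K (fun i : Fin n => (X ^ (i : ℕ) : K[X])) := by
    simpa [Function.comp_def, ← monomial_one_right_eq_X_pow] using
      (basisMonomials K).linearIndependent.comp _ Fin.val_injective
  have hcomp : evalFun ∘ (fun i : Fin n => (X ^ (i : ℕ) : K[X])) =
      fun (i : Fin n) (a : K) => a ^ (i : ℕ) := by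
    ext i a
    simp [evalFun]
  exact hcomp ▸ hX.map' evalFun hinj

theorem diagonal_eq_smul_e11_add_smul_e22 (F : Type*) [Field F] (a b : F) :
    Matrix.diagonal ![a, b] = a • e11 F + b • e22 F := by
  ext i j
  fin_cases i <;> fin_cases j <;> simp [e11, e22, Matrix.single, Matrix.diagonal]

theorem diagonal_mem_Dsub (F : Type*) [Field F] (a b : F) :
    Matrix.diagonal ![a, b] ∈ Dsub F := by
  rw [diagonal_eq_smul_e11_add_smul_e22]
  exact add_mem (Submodule.smul_mem _ _ (Submodule.subset_span (by simp)))
    (Submodule.smul_mem _ _ (Submodule.subset_span (by simp)))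

theorem e12_mem_oddSub (F : Type*) [Field F] : e12 F ∈ oddSub F :=
  Submodule.subset_span rfl

theorem diagonal_pow_mul_e12_mul_diagonal_pow_apply (F : Type*) [Field F] (a b : F) (i j : ℕ) :
    (Matrix.diagonal ![a, b] ^ i * e12 F * Matrix.diagonal ![a, b] ^ j) 0 1 = a ^ i * b ^ j := by
  simp [Matrix.diagonal_pow, e12, Matrix.single]

theorem stmt17_general (F : Type*) [Field F] [CharZero F] (n : ℕ) :
    LinearIndependent F
      (fun i : Fin n => fun p : ↥(Dsub F) × ↥(oddSub F) =>
        ((p.1 : M2 F)) ^ (i : ℕ) * ((p.2 : M2 F)) * ((p.1 : M2 F)) ^ (n - 1 - (i : ℕ))) := by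
  let point (a : F) : Dsub F × oddSub F :=
    (⟨_, diagonal_mem_Dsub F a 1⟩, ⟨_, e12_mem_oddSub F⟩)
  let restrict : (Dsub F × oddSub F → M2 F) →ₗ[F] F → F :=
    LinearMap.pi fun a => (Matrix.entryLinearMap F F 0 1).comp (LinearMap.proj (point a))
  refine .of_comp restrict ?_
  convert linearIndependent_fun_pow F n using 1
  ext i a
  simp [restrict, point, diagonal_pow_mul_e12_mul_diagonal_pow_apply]

/-- For every `n ≥ 1`, the `n` functions `D × (F e₁₂) → UT₂` given by
`(y, z) ↦ yⁱ z y^{n-1-i}` for `i = 0, 1, …, n-1`, are linearly independent over `F`. -/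
theorem stmt17 (F : Type*) [Field F] [CharZero F] (n : ℕ) (hn : 1 ≤ n) :
    LinearIndependent F
      (fun i : Fin n => fun p : ↥(Dsub F) × ↥(oddSub F) =>
        ((p.1 : M2 F)) ^ (i : ℕ) * ((p.2 : M2 F)) * ((p.1 : M2 F)) ^ (n - 1 - (i : ℕ))) :=
  stmt17_general F n
end
end

section
/- Let F be a field of characteristic zero. For every n ≥ 1, the F-span of the set of all functions from D to UT₂ of the form y ↦ b₀·y·b₁·y·b₂·⋯·y·bₙ (the variable y occurring exactly n times), where b₀, b₁, …, bₙ range over the diagonal subalgebra D, has dimension exactly 2. (This is the multiplicity of the irreducible character indexed by λ = (n), μ = ∅ in the generalized graded cocharacter of UT₂ under the action of D by left and right multiplication.) -/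
noncomputable section

/-!
For diagonal `b₀, …, bₙ` and `y`, the word `b₀ y b₁ ⋯ y bₙ` is the diagonal matrix
`diag(p₁ y₁₁ⁿ, p₂ y₂₂ⁿ)` with `p = b₀ b₁ ⋯ bₙ ∈ F²`, and every `p` arises (take `b₀ = diag p`,
the other `bᵢ = 1`). So the span is the range of the linear map `p ↦ (y ↦ diag(p yⁿ))` on `F²`,
which is injective, as evaluating at `y = 1` shows.
-/

section Diagonal

variable {ι R : Type*} [Fintype ι] [DecidableEq ι] [CommRing R]

theorem mul_prod_ofFn_mul_succ_eq_pow_mul_prod {M : Type*} [CommMonoid M] {n : ℕ}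
    (b : Fin (n + 1) → M) (y : M) :
    b 0 * (List.ofFn fun i : Fin n => y * b i.succ).prod = y ^ n * ∏ i, b i := by
  rw [List.prod_ofFn, Finset.prod_mul_distrib, Finset.prod_const, Finset.card_univ,
    Fintype.card_fin, Fin.prod_univ_succ, mul_left_comm]

theorem Matrix.diagonal_mul_prod_ofFn_diagonal_mul {n : ℕ} (d : Fin (n + 1) → ι → R)
    (c : ι → R) :
    Matrix.diagonal (d 0) *
        (List.ofFn fun i : Fin n => Matrix.diagonal c * Matrix.diagonal (d i.succ)).prod =
      Matrix.diagonal (c ^ n * ∏ i, d i) := by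
  rw [← mul_prod_ofFn_mul_succ_eq_pow_mul_prod]
  change _ = Matrix.diagonalRingHom ι R _
  simp only [map_mul, map_list_prod, List.map_ofFn, Function.comp_def,
    Matrix.diagonalRingHom_apply]

end Diagonal

section UT2

variable {F : Type*} [Field F]

theorem diagonal_eq_smul_e11_add_smul_e22_s19 (d : Fin 2 → F) :
    Matrix.diagonal d = d 0 • e11 F + d 1 • e22 F := by
  ext i j
  fin_cases i <;> fin_cases j <;> simp [e11, e22]

theorem mem_Dsub_iff {m : M2 F} : m ∈ Dsub F ↔ ∃ d, Matrix.diagonal d = m := by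
  rw [Dsub, Submodule.mem_span_pair]
  constructor
  · rintro ⟨a, b, rfl⟩
    exact ⟨![a, b], by simp [diagonal_eq_smul_e11_add_smul_e22_s19]⟩
  · rintro ⟨d, rfl⟩
    exact ⟨d 0, d 1, (diagonal_eq_smul_e11_add_smul_e22_s19 d).symm⟩

theorem diagonal_diag_of_mem_Dsub {m : M2 F} (hm : m ∈ Dsub F) :
    Matrix.diagonal m.diag = m := by
  obtain ⟨d, rfl⟩ := mem_Dsub_iff.1 hm
  rw [Matrix.diag_diagonal]

variable (F) (n : ℕ)

def diagPowMap : (Fin 2 → F) →ₗ[F] (↥(Dsub F) → M2 F) where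
  toFun p y := Matrix.diagonal (p * (y : M2 F).diag ^ n)
  map_add' p q := by ext1 y; simp [add_mul]
  map_smul' a p := by ext1 y; simp

theorem diagPowMap_injective : Function.Injective (diagPowMap F n) := by
  intro p q hpq
  have hone := congrFun hpq ⟨1, mem_Dsub_iff.2 ⟨1, Matrix.diagonal_one⟩⟩
  simp only [diagPowMap, LinearMap.coe_mk, AddHom.coe_mk, Matrix.diag_one, one_pow,
    mul_one] at hone
  exact Matrix.diagonal_injective hone

theorem setOf_words_eq_range_diagPowMap :
    {f : ↥(Dsub F) → M2 F | ∃ b : Fin (n + 1) → M2 F,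
        (∀ i, b i ∈ Dsub F) ∧
        f = fun y : ↥(Dsub F) =>
          b 0 * (List.ofFn fun i : Fin n => ((y : M2 F)) * b i.succ).prod} =
      Set.range (diagPowMap F n) := by
  have hword (d : Fin (n + 1) → Fin 2 → F) :
      (fun y : ↥(Dsub F) => Matrix.diagonal (d 0) *
        (List.ofFn fun i : Fin n => (y : M2 F) * Matrix.diagonal (d i.succ)).prod) =
        diagPowMap F n (∏ i, d i) := by
    ext1 y
    rw [← diagonal_diag_of_mem_Dsub y.2, Matrix.diagonal_mul_prod_ofFn_diagonal_mul, mul_comm]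
    simp [diagPowMap]
  ext f
  constructor
  · rintro ⟨b, hb, rfl⟩
    choose d hd using fun i => mem_Dsub_iff.1 (hb i)
    refine ⟨∏ i, d i, ?_⟩
    rw [← hword]
    simp only [hd]
  · rintro ⟨p, rfl⟩
    refine ⟨fun i => Matrix.diagonal ((Fin.cons p 1 : Fin (n + 1) → Fin 2 → F) i),
      fun i => mem_Dsub_iff.2 ⟨_, rfl⟩, ?_⟩
    rw [hword]
    simp [Fin.prod_univ_succ]

end UT2

theorem stmt19_general (F : Type*) [Field F] (n : ℕ) :
    Module.finrank F ↥(Submodule.span F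
      {f : ↥(Dsub F) → M2 F | ∃ b : Fin (n + 1) → M2 F,
        (∀ i, b i ∈ Dsub F) ∧
        f = fun y : ↥(Dsub F) =>
          b 0 * (List.ofFn fun i : Fin n => ((y : M2 F)) * b i.succ).prod})
      = 2 := by
  rw [setOf_words_eq_range_diagPowMap, ← LinearMap.coe_range, Submodule.span_eq,
    LinearMap.finrank_range_of_inj (diagPowMap_injective F n), Module.finrank_fin_fun]

/-- For every `n ≥ 1`, the `F`-span of the functions `D → UT₂` of the
form `y ↦ b₀ y b₁ y b₂ ⋯ y bₙ` (with `y` occurring `n` times), where `b₀, …, bₙ` range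
over the diagonal subalgebra `D`, has dimension exactly `2`. -/
theorem stmt19 (F : Type*) [Field F] [CharZero F] (n : ℕ) (hn : 1 ≤ n) :
    Module.finrank F ↥(Submodule.span F
      {f : ↥(Dsub F) → M2 F | ∃ b : Fin (n + 1) → M2 F,
        (∀ i, b i ∈ Dsub F) ∧
        f = fun y : ↥(Dsub F) =>
          b 0 * (List.ofFn fun i : Fin n => ((y : M2 F)) * b i.succ).prod})
      = 2 :=
  stmt19_general F n
end
end
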